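/- arXiv:1204.3197 — 2 statements merged into one kernel-verified Lean document; each statement's English description precedes it below -/
import Mathlib

section
/- Let ζ, ψ ∈ Ψ. If the percolation configuration ω_{ζ,ψ} admits an infinite open permitted path starting from the origin, then the pair of weighted words (ζ, ψ) is compatible. -/
open Filter Set MeasureTheory
open scoped ENNReal NNReal

namespace Paper

/-! ### Binary sequences and compatibility -/

/-- Delete the `i`-th entry of a sequence, shifting everything to the right of it
one step to the left. -/
def deleteAt {α : Type*} (ξ : ℕ → α) (i : ℕ) : ℕ → α :=
  fun j => if j < i then ξ j else ξ (j + 1)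

/-- The annihilation operator `Δ_i^0` on binary sequences: delete the `i`-th digit
if it is a zero (`false`), otherwise do nothing. -/
def delta0 (ξ : ℕ → Bool) (i : ℕ) : ℕ → Bool :=
  if ξ i = false then deleteAt ξ i else ξ

/-- The annihilation operator `Δ_i^1` on binary sequences: delete the `i`-th digit
if it is a one (`true`), otherwise do nothing. -/
def delta1 (ξ : ℕ → Bool) (i : ℕ) : ℕ → Bool :=
  if ξ i = true then deleteAt ξ i else ξ

/-- `Reach1 η η'` : `η'` is obtained from `η` by finitely many applications of
operators `Δ_·^1`. -/
def Reach1 : (ℕ → Bool) → (ℕ → Bool) → Prop :=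
  Relation.ReflTransGen fun a b => ∃ i, b = delta1 a i

/-- `Reach0 ξ ξ'` : `ξ'` is obtained from `ξ` by finitely many applications of
operators `Δ_·^0`. -/
def Reach0 : (ℕ → Bool) → (ℕ → Bool) → Prop :=
  Relation.ReflTransGen fun a b => ∃ i, b = delta0 a i

/-- Compatibility of an ordered pair of binary sequences: one can delete ones from `η`
and zeroes from `ξ` so that the resulting sequences converge (in the product topology)
to a common limit. -/
def Compatible (η ξ : ℕ → Bool) : Prop :=
  ∃ (ηs ξs : ℕ → ℕ → Bool) (l : ℕ → Bool),
    (∀ k, Reach1 η (ηs k)) ∧ (∀ k, Reach0 ξ (ξs k)) ∧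
      Tendsto ηs atTop (nhds l) ∧ Tendsto ξs atTop (nhds l)

/-- `μ` is the product Bernoulli measure on `{0,1}^ℕ` with parameter `p`. -/
def IsBernoulliProduct (μ : Measure (ℕ → Bool)) (p : ℝ) : Prop :=
  IsProbabilityMeasure μ ∧
    ∀ (s : Finset ℕ) (b : ℕ → Bool),
      μ {ξ | ∀ i ∈ s, ξ i = b i} = ∏ i ∈ s, ENNReal.ofReal (if b i then p else 1 - p)

/-- The set `Ξ_∞` of binary sequences with infinitely many ones and infinitely many
zeroes. -/
def Xinf (ξ : ℕ → Bool) : Prop :=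
  (∀ n, ∃ m, n ≤ m ∧ ξ m = true) ∧ ∀ n, ∃ m, n ≤ m ∧ ξ m = false

/-- Length of the run of ones of `ξ` starting at position `n` (junk value `0` if the
run is infinite). -/
noncomputable def runLen (ξ : ℕ → Bool) (n : ℕ) : ℕ :=
  letI := Classical.dec (∃ k, ξ (n + k) = false)
  if h : ∃ k, ξ (n + k) = false then Nat.find h else 0

/-- The position in `ξ` at which the `j`-th letter of the weighted word `f ξ` starts. -/
noncomputable def fpos (ξ : ℕ → Bool) : ℕ → ℕ
  | 0 => 0
  | j + 1 => fpos ξ j + max (runLen ξ (fpos ξ j)) 1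

/-- The run-length map `f : Ξ_∞ → Ψ`, replacing each maximal run of ones by a single
letter whose weight is the length of the run (zeroes being kept as letters of
weight `0`). -/
noncomputable def fmap (ξ : ℕ → Bool) : ℕ → ℕ :=
  fun j => runLen ξ (fpos ξ j)

/-! ### Weighted words -/

/-- The set `Ψ` of weighted words: a weight `≥ 1` is always followed by a weight `0`. -/
def Psi (ψ : ℕ → ℕ) : Prop := ∀ i, 1 ≤ ψ i → ψ (i + 1) = 0

/-- The annihilation operator `Δ_i^0` on weighted words. -/
def pdelta0 (ψ : ℕ → ℕ) (i : ℕ) : ℕ → ℕ :=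
  if ψ i ≠ 0 then ψ
  else if i = 0 ∨ ψ (i - 1) = 0 ∨ ψ (i + 1) = 0 then deleteAt ψ i
  else fun j => if j + 1 < i then ψ j else if j + 1 = i then ψ (i - 1) + ψ (i + 1) else ψ (j + 2)

/-- The annihilation operator `Δ_i^1` on weighted words. -/
def pdelta1 (ψ : ℕ → ℕ) (i : ℕ) : ℕ → ℕ :=
  if ψ i = 0 then ψ
  else if ψ i = 1 then deleteAt ψ i
  else Function.update ψ i (ψ i - 1)

/-- Finitely many applications of operators `Δ_·^1` on weighted words. -/
def PReach1 : (ℕ → ℕ) → (ℕ → ℕ) → Prop :=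
  Relation.ReflTransGen fun a b => ∃ i, b = pdelta1 a i

/-- Finitely many applications of operators `Δ_·^0` on weighted words. -/
def PReach0 : (ℕ → ℕ) → (ℕ → ℕ) → Prop :=
  Relation.ReflTransGen fun a b => ∃ i, b = pdelta0 a i

/-- Compatibility of an ordered pair of weighted words. -/
def CompatibleP (ζ ψ : ℕ → ℕ) : Prop :=
  ∃ (ζs ψs : ℕ → ℕ → ℕ) (l : ℕ → ℕ),
    (∀ k, PReach1 ζ (ζs k)) ∧ (∀ k, PReach0 ψ (ψs k)) ∧
      (∀ k, Psi (ζs k)) ∧ (∀ k, Psi (ψs k)) ∧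
      Tendsto ζs atTop (nhds l) ∧ Tendsto ψs atTop (nhds l)

/-! ### The oriented percolation process -/

/-- Oriented edges of the graph `G`: from `u` to `u + (0,1)` and from `u` to `u + (1,1)`. -/
def IsStep (u v : ℕ × ℕ) : Prop :=
  (v.1 = u.1 ∧ v.2 = u.2 + 1) ∨ (v.1 = u.1 + 1 ∧ v.2 = u.2 + 1)

/-- Open vertices of the configuration `ω_{ζ,ψ}`.  (Sequences are `0`-indexed in this
formalization, so the entry of `ζ` at the paper's position `v₁ ≥ 1` is `ζ (v₁ - 1)`.) -/
def OpenV (ζ ψ : ℕ → ℕ) (v : ℕ × ℕ) : Prop :=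
  v = (0, 0) ∨ (1 ≤ v.1 ∧ 1 ≤ v.2 ∧ ψ (v.2 - 1) ≤ ζ (v.1 - 1))

/-- Heavy vertices: `v₂ = 0`, or the row weight `ψ_{v₂}` is positive. -/
def Heavy (ψ : ℕ → ℕ) (v : ℕ × ℕ) : Prop := v.2 = 0 ∨ 1 ≤ ψ (v.2 - 1)

/-- `π 0, π 1, …, π n` is an open oriented path in `ω_{ζ,ψ}`. -/
def IsOpenPath (ζ ψ : ℕ → ℕ) (π : ℕ → ℕ × ℕ) (n : ℕ) : Prop :=
  (∀ i < n, IsStep (π i) (π (i + 1))) ∧ ∀ i ≤ n, OpenV ζ ψ (π i)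

/-- The path `π 0, …, π n` is permitted: any two distinct heavy vertices on it have
different first coordinates. -/
def IsPermitted (ψ : ℕ → ℕ) (π : ℕ → ℕ × ℕ) (n : ℕ) : Prop :=
  ∀ i ≤ n, ∀ j ≤ n, π i ≠ π j → Heavy ψ (π i) → Heavy ψ (π j) → (π i).1 ≠ (π j).1

/-- There is an infinite open permitted oriented path starting from the origin in the
percolation configuration `ω_{ζ,ψ}`. -/
def InfOpenPermitted (ζ ψ : ℕ → ℕ) : Prop :=
  ∃ π : ℕ → ℕ × ℕ, π 0 = (0, 0) ∧ (∀ n, IsStep (π n) (π (n + 1))) ∧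
    (∀ n, OpenV ζ ψ (π n)) ∧
    ∀ i j, π i ≠ π j → Heavy ψ (π i) → Heavy ψ (π j) → (π i).1 ≠ (π j).1

/-- `V_{⟨ζ,ψ⟩}(c)`: vertices in row `c` reachable from the origin by an open permitted
oriented path. -/
def Vset (ζ ψ : ℕ → ℕ) (c : ℕ) : Set (ℕ × ℕ) :=
  {v | v.2 = c ∧ ∃ (π : ℕ → ℕ × ℕ) (n : ℕ), π 0 = (0, 0) ∧ π n = v ∧
    IsOpenPath ζ ψ π n ∧ IsPermitted ψ π n}

/-- The open oriented cluster of the origin in `ω_{ζ,ψ}`. -/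
def ClusterO (ζ ψ : ℕ → ℕ) : Set (ℕ × ℕ) :=
  {v | ∃ (π : ℕ → ℕ × ℕ) (n : ℕ), π 0 = (0, 0) ∧ π n = v ∧ IsOpenPath ζ ψ π n}

/-- The horizontal slab `S_{[a,b]}`. -/
def Slab (a b : ℕ) : Set (ℕ × ℕ) := {v | a ≤ v.2 ∧ v.2 ≤ b}

/-- The horizontal discrete segment in row `c` with endpoints `a` and `b`. -/
def HSeg (c a b : ℕ) : Set (ℕ × ℕ) := {v | v.2 = c ∧ a ≤ v.1 ∧ v.1 ≤ b}

/-- The shift `θ_m`. -/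
def shiftSeq (m : ℕ) (ψ : ℕ → ℕ) : ℕ → ℕ := fun j => ψ (j + m)

/-- The hierarchical weighted word `ζ(L)`: the letter at the paper's position
`j ≥ 1` (Lean index `j - 1`) has weight `k` iff `L^k ∣ j` and `L^{k+1} ∤ j`. -/
noncomputable def zetaL (L : ℕ) : ℕ → ℕ := fun j => sSup {k | L ^ k ∣ j + 1}

/-- Lean indices at which `ψ` has an entry `≥ k`. -/
def idxSet (ψ : ℕ → ℕ) (k : ℕ) : Set ℕ := {n | k ≤ ψ n}

/-- `i_k(ψ)`: the first (1-based, as in the paper) position at which `ψ` has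
an entry `≥ k` (meaningful when `idxSet ψ k` is nonempty). -/
noncomputable def idx (ψ : ℕ → ℕ) (k : ℕ) : ℕ := sInf (idxSet ψ k) + 1

/-- Condition a) of being `M`-spaced. -/
def CondA (M : ℕ) (ψ : ℕ → ℕ) : Prop := ∀ i j : ℕ, i < j → M ^ min (ψ i) (ψ j) ≤ j - i

/-- `ψ ∈ Ψ_M^k` : `ψ` is `M`-spaced up to level `k`. -/
def SpacedUpTo (M k : ℕ) (ψ : ℕ → ℕ) : Prop :=
  Psi ψ ∧ CondA M ψ ∧ ∀ j, 1 ≤ j → j ≤ k → (idxSet ψ j).Nonempty → M ^ j ≤ idx ψ j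

/-- `ψ ∈ Ψ_M` : `ψ` is `M`-spaced. -/
def Spaced (M : ℕ) (ψ : ℕ → ℕ) : Prop :=
  Psi ψ ∧ CondA M ψ ∧ ∀ j, 1 ≤ j → (idxSet ψ j).Nonempty → M ^ j ≤ idx ψ j

/-! ### Discrete Hausdorff dimension (Barlow–Taylor) -/

/-- `ν_α(A, F)` with the normalizing diameter `dF` of `F` given explicitly; the
infimum is over countable covers of `A ∩ F` by integer intervals `[x, y)`. -/
noncomputable def nuBT (α : ℝ) (A F : Set ℤ) (dF : ℝ) : ℝ≥0∞ :=
  (⨅ (B : ℕ → ℤ × ℤ) (_ : A ∩ F ⊆ ⋃ i, Set.Ico (B i).1 (B i).2),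
      ∑' i, ENNReal.ofReal ((((B i).2 - (B i).1 : ℤ)) : ℝ) ^ α) /
    ENNReal.ofReal dF ^ α

/-- The annulus `I_n^{(r)}` (for `n ≥ 1`). -/
noncomputable def ringBT (r n : ℕ) : Set ℤ :=
  if n = 1 then Set.Ico (-(r : ℤ)) (r : ℤ)
  else Set.Ico (-((r : ℤ) ^ n)) ((r : ℤ) ^ n) \ Set.Ico (-((r : ℤ) ^ (n - 1))) ((r : ℤ) ^ (n - 1))

/-- `m_α^{(r)}(A) = ∑_{n ≥ 1} ν_α(A, I_n^{(r)})`. -/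
noncomputable def mBT (r : ℕ) (α : ℝ) (A : Set ℤ) : ℝ≥0∞ :=
  ∑' n : ℕ, nuBT α A (ringBT r (n + 1)) (2 * (r : ℝ) ^ (n + 1))

/-- The discrete (Barlow–Taylor) Hausdorff dimension of `A ⊆ ℤ`. -/
noncomputable def dimBT (r : ℕ) (A : Set ℤ) : ℝ :=
  sInf {α : ℝ | 0 < α ∧ mBT r α A < ⊤}

/-- The set of zeroes of a binary sequence, viewed inside `ℤ` (at the paper's
positions `1, 2, …`). -/
def zeroSetZ (η : ℕ → Bool) : Set ℤ := {i : ℤ | ∃ n : ℕ, i = (n : ℤ) + 1 ∧ η n = false}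

/-! ### The grouping construction -/

/-- A cluster together with its mass. -/
abbrev Clu : Type := Set ℕ × ℕ

/-- The set of (paper, i.e. 1-based) positions of the ones of `ξ`. -/
def Gamma (ξ : ℕ → Bool) : Set ℕ := {n | 1 ≤ n ∧ ξ (n - 1) = true}

/-- The span of a set: the smallest interval containing it. -/
noncomputable def spanI (C : Set ℕ) : Set ℕ := Set.Icc (sInf C) (sSup C)

/-- Euclidean distance between two sets of integers. -/
noncomputable def cluDist (C D : Set ℕ) : ℕ := sInf {d | ∃ a ∈ C, ∃ b ∈ D, d = Nat.dist a b}

/-- Diameter of a set of integers. -/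
noncomputable def sdiam (C : Set ℕ) : ℕ := sSup {d | ∃ a ∈ C, ∃ b ∈ C, d = Nat.dist a b}

/-- `C` lies entirely to the left of `D`. -/
def cluLT (C D : Set ℕ) : Prop := ∀ a ∈ C, ∀ b ∈ D, a < b

/-- `p` and `q` are adjacent clusters of the collection `B` (no cluster of `B` lies
strictly between them) at distance `< t`. -/
def adjStep (B : Set Clu) (t : ℕ) (p q : Clu) : Prop :=
  p ∈ B ∧ q ∈ B ∧ cluDist p.1 q.1 < t ∧
    ((cluLT p.1 q.1 ∧ ∀ r ∈ B, ¬(cluLT p.1 r.1 ∧ cluLT r.1 q.1)) ∨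
      (cluLT q.1 p.1 ∧ ∀ r ∈ B, ¬(cluLT q.1 r.1 ∧ cluLT r.1 p.1)))

/-- The maximal run (within the collection `B`, with gap threshold `t`) containing `p`. -/
def runOf (B : Set Clu) (t : ℕ) (p : Clu) : Set Clu :=
  {q ∈ B | Relation.ReflTransGen (adjStep B t) p q}

/-- `R` is a maximal run of length `≥ 2` of clusters of `B` with gap threshold `t`. -/
def IsRun (B : Set Clu) (t : ℕ) (R : Set Clu) : Prop :=
  ∃ p ∈ B, R = runOf B t p ∧ ∃ q ∈ R, q ≠ p

/-- The level-`(k+1)` cluster created from a maximal `(k+1)`-run `R`: its point set is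
`span(R) ∩ Γ`, and its mass is `∑ m(constituents) - k (n - 1)`. -/
noncomputable def runClu (Γ : Set ℕ) (k : ℕ) (R : Set Clu) : Clu :=
  (spanI (⋃ q ∈ R, q.1) ∩ Γ, (∑ᶠ q ∈ R, q.2) - k * (Nat.card R - 1))

/-- One step of the grouping construction: from the partition `𝐂_k` to `𝐂_{k+1}`. -/
noncomputable def nextPart (Γ : Set ℕ) (M k : ℕ) (S : Set Clu) : Set Clu :=
  {c | ∃ R, IsRun {q ∈ S | k + 1 ≤ q.2} (M ^ (k + 1)) R ∧ c = runClu Γ k R} ∪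
    {c ∈ S | ∀ R, IsRun {q ∈ S | k + 1 ≤ q.2} (M ^ (k + 1)) R →
      Disjoint c.1 (spanI (⋃ q ∈ R, q.1))}

/-- The partition `𝐂_k` of `Γ` into clusters with masses (grouping construction with
spacing parameter `M`). -/
noncomputable def parts (Γ : Set ℕ) (M : ℕ) : ℕ → Set Clu
  | 0 => {c | ∃ x ∈ Γ, c = ({x}, 1)}
  | k + 1 => nextPart Γ M k (parts Γ M k)

/-- `c` is a cluster of level `ℓ`: it appears in `𝐂_ℓ` and in no earlier partition. -/
def IsLevelCluster (Γ : Set ℕ) (M ℓ : ℕ) (c : Clu) : Prop :=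
  c ∈ parts Γ M ℓ ∧ ∀ k < ℓ, c ∉ parts Γ M k

/-- `κ(x) < ∞` : the levels of the clusters containing `x` are bounded. -/
def KappaFinite (Γ : Set ℕ) (M : ℕ) (x : ℕ) : Prop :=
  BddAbove {ℓ | ∃ c : Clu, IsLevelCluster Γ M ℓ c ∧ x ∈ c.1}

/-- The event `Ξ(p)` on which the grouping construction is well set:
`κ(x) < ∞` for every `x ∈ Γ(ξ)`. -/
def GoodSeq (M : ℕ) (ξ : ℕ → Bool) : Prop := ∀ x ∈ Gamma ξ, KappaFinite (Gamma ξ) M x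

/-- The collection `𝐂_∞` of maximal clusters: those that stay in `𝐂_k` forever. -/
def maxClusters (Γ : Set ℕ) (M : ℕ) : Set Clu :=
  {c | ∃ ℓ, ∀ k, ℓ ≤ k → c ∈ parts Γ M k}

/-- The defining condition of `χ(ξ) ≤ k` : every maximal cluster of mass `> k`
is at distance `≥ M^{mass}` from the origin.  (Positions are 1-based, so the distance
from a cluster to `0` is its smallest element.) -/
def ChiCond (Γ : Set ℕ) (M k : ℕ) : Prop :=
  ∀ c ∈ maxClusters Γ M, k < c.2 → M ^ c.2 ≤ sInf c.1

/-- The maximal cluster containing a given point (junk if there is none). -/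
noncomputable def maxCluOf (Γ : Set ℕ) (M : ℕ) (x : ℕ) : Clu :=
  letI := Classical.dec (∃ c : Clu, c ∈ maxClusters Γ M ∧ x ∈ c.1)
  if h : ∃ c : Clu, c ∈ maxClusters Γ M ∧ x ∈ c.1 then h.choose else (∅, 0)

/-- Enumeration of the maximal clusters in increasing order, together with the union
of those already enumerated. -/
noncomputable def enumAux (Γ : Set ℕ) (M : ℕ) : ℕ → Clu × Set ℕ
  | 0 => (maxCluOf Γ M (sInf Γ), (maxCluOf Γ M (sInf Γ)).1)
  | j + 1 =>
    (maxCluOf Γ M (sInf (Γ \ (enumAux Γ M j).2)),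
      (enumAux Γ M j).2 ∪ (maxCluOf Γ M (sInf (Γ \ (enumAux Γ M j).2))).1)

/-- The `j`-th maximal cluster `C_{∞,j}` (`j` is 0-based here). -/
noncomputable def enumClu (Γ : Set ℕ) (M : ℕ) (j : ℕ) : Clu := (enumAux Γ M j).1

/-- The start-point `x̂_j` of the `j`-th maximal cluster (`j` is 0-based here). -/
noncomputable def hatx (Γ : Set ℕ) (M : ℕ) : ℕ → ℕ
  | 0 => sInf Γ
  | j + 1 => sInf (Γ \ (enumAux Γ M j).2)

/-- The (1-based) position `x̂_j - ∑_{t<j} diam(C_{∞,t})` at which the entry of the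
`j`-th maximal cluster sits in the weighted word `ψ^ξ`. -/
noncomputable def cluPos (Γ : Set ℕ) (M : ℕ) (j : ℕ) : ℕ :=
  hatx Γ M j - ∑ t ∈ Finset.range j, sdiam (enumClu Γ M t).1

/-- The weighted word `ψ^ξ` associated to `ξ` by the grouping construction. -/
noncomputable def psiXi (M : ℕ) (ξ : ℕ → Bool) : ℕ → ℕ := fun i =>
  letI := Classical.dec (∃ j : ℕ, i + 1 = cluPos (Gamma ξ) M j)
  if h : ∃ j : ℕ, i + 1 = cluPos (Gamma ξ) M j then (enumClu (Gamma ξ) M h.choose).2 else 0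

/-- `ψ ⪯_M ζ`. -/
def PrecM (M : ℕ) (ψ ζ : ℕ → ℕ) : Prop :=
  ∀ j, (ψ j = 0 ↔ ζ j = 0) ∧ (1 ≤ ψ j → ψ j ≤ ζ j ∧ ζ j ≤ 3 * M ^ (ψ j - 1))

/-- The set `∪_i (span(C_{∞,i}) \ C_{∞,i})` of points to be deleted. -/
def Dset (Γ : Set ℕ) (M : ℕ) : Set ℕ := ⋃ c ∈ maxClusters Γ M, spanI c.1 \ c.1

/-- `j_n(ξ)` : the `n`-th (0-based) element of `Dset`, shifted by `n` to account for
the previous deletions (this is the paper's `j_{n+1}`, a 1-based position). -/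
noncomputable def jseq (Γ : Set ℕ) (M : ℕ) (n : ℕ) : ℕ := Nat.nth (· ∈ Dset Γ M) n - n

/-- The iterates `ξ^{(n)}` obtained by successively deleting the zeroes of `ξ`
lying inside spans of maximal clusters. -/
noncomputable def xiIter (M : ℕ) (ξ : ℕ → Bool) : ℕ → ℕ → Bool
  | 0 => ξ
  | n + 1 => delta0 (xiIter M ξ n) (jseq (Gamma ξ) M n - 1)

/-- The fattened hierarchical weighted word `ζ̃(L)` (with `M = 3(L+1)`). -/
noncomputable def tzeta (L : ℕ) : ℕ → ℕ := fun j =>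
  if zetaL L j = 0 then 0 else 3 * (3 * (L + 1)) ^ (zetaL L j - 1)

/-- `|A ∩ [0, n)|` for `A ⊆ ℕ`. -/
noncomputable def massCount (A : Set ℕ) (n : ℕ) : ℕ := Nat.card {a : ℕ | a ∈ A ∧ a < n}


/-! Generic auxiliary machinery for statement_3 -/

/-- prepend a letter to a word -/
def consW (x : ℕ) (w : ℕ → ℕ) : ℕ → ℕ := fun j => match j with | 0 => x | j+1 => w j

@[simp] lemma consW_zero (x : ℕ) (w : ℕ → ℕ) : consW x w 0 = x := rfl
@[simp] lemma consW_succ (x : ℕ) (w : ℕ → ℕ) (j : ℕ) : consW x w (j+1) = w j := rfl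

lemma deleteAt_consW (x : ℕ) (w : ℕ → ℕ) (i : ℕ) :
    deleteAt (consW x w) (i+1) = consW x (deleteAt w i) := by
  funext j
  rcases j with _ | j
  · simp [deleteAt]
  · show (if j+1 < i+1 then consW x w (j+1) else consW x w (j+1+1)) =
      (if j < i then w j else w (j+1))
    by_cases hj : j < i
    · rw [if_pos (show j+1 < i+1 by omega), if_pos hj]
      rfl
    · rw [if_neg (show ¬ j+1 < i+1 by omega), if_neg hj]
      rfl

lemma update_consW (x : ℕ) (w : ℕ → ℕ) (i n : ℕ) :
    Function.update (consW x w) (i+1) n = consW x (Function.update w i n) := by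
  funext j
  rcases j with _ | j
  · simp [Function.update_apply]
  · simp [Function.update_apply]

lemma pdelta1_of_zero {w : ℕ → ℕ} {i : ℕ} (h : w i = 0) : pdelta1 w i = w := if_pos h

lemma pdelta1_of_one {w : ℕ → ℕ} {i : ℕ} (h : w i = 1) : pdelta1 w i = deleteAt w i := by
  unfold pdelta1
  rw [if_neg (by omega), if_pos h]

lemma pdelta1_of_big {w : ℕ → ℕ} {i : ℕ} (h : 2 ≤ w i) :
    pdelta1 w i = Function.update w i (w i - 1) := by
  unfold pdelta1
  rw [if_neg (by omega), if_neg (by omega)]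

lemma pdelta0_of_ne {w : ℕ → ℕ} {i : ℕ} (h : w i ≠ 0) : pdelta0 w i = w := if_pos h

lemma pdelta0_of_del {w : ℕ → ℕ} {i : ℕ} (h : w i = 0)
    (hc : i = 0 ∨ w (i-1) = 0 ∨ w (i+1) = 0) : pdelta0 w i = deleteAt w i := by
  unfold pdelta0
  rw [if_neg (not_not.2 h), if_pos hc]

lemma pdelta0_of_merge {w : ℕ → ℕ} {i : ℕ} (h : w i = 0)
    (hc : ¬ (i = 0 ∨ w (i-1) = 0 ∨ w (i+1) = 0)) :
    pdelta0 w i = fun j => if j+1 < i then w j else if j+1 = i then w (i-1) + w (i+1) else w (j+2) := by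
  unfold pdelta0
  rw [if_neg (not_not.2 h), if_neg hc]

lemma pdelta1_consW (x : ℕ) (w : ℕ → ℕ) (i : ℕ) :
    pdelta1 (consW x w) (i+1) = consW x (pdelta1 w i) := by
  have hv : consW x w (i+1) = w i := rfl
  rcases h0 : w i with _ | n
  · rw [pdelta1_of_zero (hv.trans h0), pdelta1_of_zero h0]
  · rcases n with _ | n
    · rw [pdelta1_of_one (hv.trans h0), pdelta1_of_one h0, deleteAt_consW]
    · rw [pdelta1_of_big (show 2 ≤ consW x w (i+1) by rw [hv, h0]; omega),
        pdelta1_of_big (show 2 ≤ w i by omega), hv, update_consW]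

lemma pdelta0_consW (x : ℕ) (w : ℕ → ℕ) (i : ℕ) (hs : i = 0 → w 1 = 0) :
    pdelta0 (consW x w) (i+1) = consW x (pdelta0 w i) := by
  have hv : consW x w (i+1) = w i := rfl
  by_cases h0 : w i = 0
  · by_cases hc : i = 0 ∨ w (i-1) = 0 ∨ w (i+1) = 0
    · have hcL : i+1 = 0 ∨ consW x w (i+1-1) = 0 ∨ consW x w (i+1+1) = 0 := by
        rcases Nat.eq_zero_or_pos i with hi | hi
        · subst hi
          refine Or.inr (Or.inr ?_)
          have := hs rfl
          simpa using this
        · obtain ⟨i', rfl⟩ : ∃ i', i = i'+1 := ⟨i-1, by omega⟩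
          rcases hc with hc | hc | hc
          · omega
          · refine Or.inr (Or.inl ?_)
            simpa using hc
          · exact Or.inr (Or.inr (by simpa using hc))
      rw [pdelta0_of_del (hv.trans h0) hcL, pdelta0_of_del h0 hc, deleteAt_consW]
    · push_neg at hc
      obtain ⟨hi0, hm1, hp1⟩ := hc
      obtain ⟨i', rfl⟩ : ∃ i', i = i'+1 := ⟨i-1, by omega⟩
      have hcL : ¬ (i'+1+1 = 0 ∨ consW x w (i'+1+1-1) = 0 ∨ consW x w (i'+1+1+1) = 0) := by
        push_neg
        refine ⟨by omega, ?_, by simpa using hp1⟩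
        simpa using hm1
      rw [pdelta0_of_merge (hv.trans h0) hcL,
        pdelta0_of_merge h0 (by push_neg; exact ⟨hi0, hm1, hp1⟩)]
      funext j
      rcases j with _ | j
      · show (if 0+1 < i'+1+1 then consW x w 0
            else if 0+1 = i'+1+1 then consW x w (i'+1+1-1) + consW x w (i'+1+1+1)
            else consW x w (0+2)) = x
        rw [if_pos (by omega)]
        rfl
      · show (if j+1+1 < i'+1+1 then consW x w (j+1)
            else if j+1+1 = i'+1+1 then consW x w (i'+1+1-1) + consW x w (i'+1+1+1)
            else consW x w (j+1+2)) =
          (if j+1 < i'+1 then w j else if j+1 = i'+1 then w (i'+1-1) + w (i'+1+1) else w (j+2))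
        by_cases hA : j+1 < i'+1
        · rw [if_pos (show j+1+1 < i'+1+1 by omega), if_pos hA]
          rfl
        · by_cases hB : j+1 = i'+1
          · rw [if_neg (by omega), if_pos (show j+1+1 = i'+1+1 by omega), if_neg hA, if_pos hB]
            have e1 : i'+1+1-1 = i'+1 := rfl
            have e2 : i'+1-1 = i' := rfl
            rw [e1, e2]
            rfl
          · rw [if_neg (by omega), if_neg (by omega), if_neg hA, if_neg hB]
            rfl
  · rw [pdelta0_of_ne (show consW x w (i+1) ≠ 0 from by rw [hv]; exact h0), pdelta0_of_ne h0]


/-! ### Reachability machinery -/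

/-- A "safe" `pdelta0` step: a step at position `0` is only allowed when the entry
at position 1 is zero (so that the step remains legal after prepending a letter). -/
def Step0S (a b : ℕ → ℕ) : Prop := ∃ i, b = pdelta0 a i ∧ (i = 0 → a 1 = 0)

def Safe0 : (ℕ → ℕ) → (ℕ → ℕ) → Prop := Relation.ReflTransGen Step0S

lemma Safe0.toPReach0 {w w' : ℕ → ℕ} (h : Safe0 w w') : PReach0 w w' :=
  Relation.ReflTransGen.mono (fun _ _ (hab : Step0S _ _) => hab.imp (fun _ hi => hi.1)) _ _ h

lemma safe0_consW_lift (x : ℕ) {w w' : ℕ → ℕ} (h : Safe0 w w') :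
    Safe0 (consW x w) (consW x w') := by
  refine Relation.ReflTransGen.lift (consW x) (fun a b hab => ?_) _ _ h
  obtain ⟨i, hb, hsf⟩ := hab
  exact ⟨i+1, by rw [hb, ← pdelta0_consW x a i hsf], fun hc => absurd hc (by omega)⟩

lemma preach1_consW_lift (x : ℕ) {w w' : ℕ → ℕ} (h : PReach1 w w') :
    PReach1 (consW x w) (consW x w') := by
  refine Relation.ReflTransGen.lift (consW x) (fun a b hab => ?_) _ _ h
  obtain ⟨i, hb⟩ := hab
  exact ⟨i+1, by rw [hb, ← pdelta1_consW x a i]⟩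

lemma preach1_step (w : ℕ → ℕ) (i : ℕ) : PReach1 w (pdelta1 w i) :=
  Relation.ReflTransGen.single ⟨i, rfl⟩

lemma preach1_shift1 : ∀ (n : ℕ) (w : ℕ → ℕ), w 0 = n → 1 ≤ n →
    PReach1 w (fun j => w (j+1)) := by
  intro n
  induction n with
  | zero => omega
  | succ n IH =>
    intro w h0 _
    rcases Nat.eq_zero_or_pos n with hn | hn
    · subst hn
      have h1 : pdelta1 w 0 = deleteAt w 0 := pdelta1_of_one (by omega)
      have hd : deleteAt w 0 = fun j => w (j+1) := by
        funext j; simp [deleteAt]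
      have := preach1_step w 0
      rwa [h1, hd] at this
    · have hstep : pdelta1 w 0 = Function.update w 0 n := by
        rw [pdelta1_of_big (w := w) (i := 0) (by omega), show w 0 - 1 = n by omega]
      refine (preach1_step w 0).trans ?_
      rw [hstep]
      have he : (fun j => Function.update w 0 n (j+1)) = fun j => w (j+1) := by
        funext j
        rw [Function.update_of_ne (by omega)]
      exact he ▸ IH (Function.update w 0 n) (by simp) hn

lemma preach1_shift : ∀ (k : ℕ) (w : ℕ → ℕ), (∀ a, a < k → 1 ≤ w a) →
    PReach1 w (fun j => w (j+k)) := by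
  intro k
  induction k with
  | zero =>
    intro w _
    have hid : (fun j => w (j+0)) = w := by funext j; rw [Nat.add_zero]
    rw [hid]
    exact Relation.ReflTransGen.refl
  | succ k IH =>
    intro w h
    have h1 : PReach1 w (fun j => w (j+1)) := preach1_shift1 (w 0) w rfl (h 0 (by omega))
    have h2 := IH (fun j => w (j+1)) (fun a ha => h (a+1) (by omega))
    refine h1.trans ?_
    have he : (fun j => w (j+(k+1))) = fun j => (fun i => w (i+1)) (j+k) := by
      funext j
      rfl
    rw [he]
    exact h2

lemma preach1_lower0 : ∀ (d : ℕ) (w : ℕ → ℕ) (t : ℕ), 1 ≤ t → w 0 = t + d →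
    PReach1 w (Function.update w 0 t) := by
  intro d
  induction d with
  | zero =>
    intro w t ht h0
    rw [show t = w 0 by omega, Function.update_eq_self]
    exact Relation.ReflTransGen.refl
  | succ d IH =>
    intro w t ht h0
    have hstep : pdelta1 w 0 = Function.update w 0 (t + d) := by
      rw [pdelta1_of_big (w := w) (i := 0) (by omega), show w 0 - 1 = t + d by omega]
    refine (preach1_step w 0).trans ?_
    rw [hstep]
    have := IH (Function.update w 0 (t+d)) t ht (by simp)
    rwa [Function.update_idem] at this

lemma safe0_shift : ∀ (k : ℕ) (w : ℕ → ℕ), (∀ a, a < k → w a = 0 ∧ w (a+1) = 0) →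
    Safe0 w (fun j => w (j+k)) := by
  intro k
  induction k with
  | zero =>
    intro w _
    have hid : (fun j => w (j+0)) = w := by funext j; rw [Nat.add_zero]
    rw [hid]
    exact Relation.ReflTransGen.refl
  | succ k IH =>
    intro w h
    have hd : deleteAt w 0 = fun j => w (j+1) := by
      funext j; simp [deleteAt]
    have h1 : Safe0 w (fun j => w (j+1)) := by
      refine Relation.ReflTransGen.single ⟨0, ?_, fun _ => (h 0 (by omega)).2⟩
      rw [pdelta0_of_del (h 0 (by omega)).1 (Or.inl rfl), hd]
    have h2 := IH (fun j => w (j+1)) (fun a ha => ⟨(h (a+1) (by omega)).1, (h (a+1) (by omega)).2⟩)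
    refine h1.trans ?_
    have he : (fun j => w (j+(k+1))) = fun j => (fun i => w (i+1)) (j+k) := by
      funext j
      rfl
    rw [he]
    exact h2

lemma preach0_shift : ∀ (k : ℕ) (w : ℕ → ℕ), (∀ a, a < k → w a = 0) →
    PReach0 w (fun j => w (j+k)) := by
  intro k
  induction k with
  | zero =>
    intro w _
    have hid : (fun j => w (j+0)) = w := by funext j; rw [Nat.add_zero]
    rw [hid]
    exact Relation.ReflTransGen.refl
  | succ k IH =>
    intro w h
    have hd : deleteAt w 0 = fun j => w (j+1) := by
      funext j; simp [deleteAt]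
    have h1 : PReach0 w (fun j => w (j+1)) := by
      refine Relation.ReflTransGen.single ⟨0, ?_⟩
      rw [pdelta0_of_del (h 0 (by omega)) (Or.inl rfl), hd]
    have h2 := IH (fun j => w (j+1)) (fun a ha => h (a+1) (by omega))
    refine h1.trans ?_
    have he : (fun j => w (j+(k+1))) = fun j => (fun i => w (i+1)) (j+k) := by
      funext j
      rfl
    rw [he]
    exact h2

lemma Psi.shiftW {w : ℕ → ℕ} (h : Psi w) (k : ℕ) : Psi (fun j => w (j+k)) := by
  intro i hi
  have := h (i+k) hi
  show w (i+1+k) = 0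
  rw [show i+1+k = i+k+1 by omega]
  exact this

def offE (e : ℕ → ℕ) : ℕ → ℕ
  | 0 => 0
  | m+1 => e m + 1

lemma Czeta : ∀ (m : ℕ) (ζ e t : ℕ → ℕ),
    Psi ζ → StrictMono e →
    (∀ a, ζ a = 0 → ∃ j, e j = a) →
    (∀ j, 1 ≤ ζ (e j) → ζ (e (j+1)) = 0) →
    (∀ j, 1 ≤ ζ (e j) → 1 ≤ t j ∧ t j ≤ ζ (e j)) →
    ∃ ζ', PReach1 ζ ζ' ∧ Psi ζ' ∧
      (∀ j, j < m → ζ' j = if ζ (e j) = 0 then 0 else t j) ∧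
      (∀ j, ζ' (m + j) = ζ (offE e m + j)) := by
  intro m
  induction m with
  | zero =>
    intro ζ e t hζ _ _ _ _
    exact ⟨ζ, Relation.ReflTransGen.refl, hζ, fun j hj => absurd hj (by omega), fun j => rfl⟩
  | succ m IH =>
    intro ζ e t hζ he h1 hk ht
    have hpos : ∀ a, a < e 0 → 1 ≤ ζ a := by
      intro a ha
      by_contra hc
      obtain ⟨j, hj⟩ := h1 a (by omega)
      have := he.monotone (Nat.zero_le j)
      omega
    set T : ℕ → ℕ := fun j => ζ (j + (e 0 + 1)) with hT
    set v : ℕ := if ζ (e 0) = 0 then 0 else t 0 with hv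
    have hshift : PReach1 ζ (fun j => ζ (j + e 0)) := preach1_shift (e 0) ζ hpos
    have hhead : PReach1 ζ (consW v T) := by
      by_cases h00 : ζ (e 0) = 0
      · have hcw : (fun j => ζ (j + e 0)) = consW v T := by
          funext j
          rcases j with _ | j
          · show ζ (0 + e 0) = v
            rw [hv, if_pos h00, show 0 + e 0 = e 0 by omega, h00]
          · show ζ (j+1+e 0) = T j
            rw [hT]
            show ζ (j+1+e 0) = ζ (j + (e 0 + 1))
            congr 1
            omega
        rw [← hcw]
        exact hshift
      · obtain ⟨ht1, ht2⟩ := ht 0 (by omega)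
        refine hshift.trans ?_
        have hl := preach1_lower0 (ζ (e 0) - t 0) (fun j => ζ (j + e 0)) (t 0) ht1
          (by show ζ (0 + e 0) = t 0 + (ζ (e 0) - t 0); rw [show 0 + e 0 = e 0 by omega]; omega)
        have hcw : Function.update (fun j => ζ (j + e 0)) 0 (t 0) = consW v T := by
          funext j
          rcases j with _ | j
          · rw [Function.update_self]
            show t 0 = v
            rw [hv, if_neg h00]
          · rw [Function.update_of_ne (by omega)]
            show ζ (j+1+e 0) = T j
            rw [hT]
            show ζ (j+1+e 0) = ζ (j + (e 0 + 1))
            congr 1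
            omega
        rwa [hcw] at hl
    set e' : ℕ → ℕ := fun j => e (j+1) - (e 0 + 1) with he'
    have hee : ∀ j, e' j + (e 0 + 1) = e (j+1) := by
      intro j
      have h' : e 0 < e (j+1) := he (by omega)
      show e (j+1) - (e 0 + 1) + (e 0 + 1) = e (j+1)
      omega
    have hTe : ∀ j, T (e' j) = ζ (e (j+1)) := by
      intro j
      rw [hT]
      show ζ (e' j + (e 0 + 1)) = ζ (e (j+1))
      rw [hee]
    have he'm : StrictMono e' := by
      intro a b hab
      have h1' : e (a+1) < e (b+1) := he (by omega)
      have h2' : e 0 < e (a+1) := he (by omega)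
      show e (a+1) - (e 0 + 1) < e (b+1) - (e 0 + 1)
      omega
    obtain ⟨T', hTr, hTpsi, hTpre, hTtail⟩ := IH T e' (fun j => t (j+1)) (hζ.shiftW _) he'm
      (by
        intro a haz
        have : ζ (a + (e 0 + 1)) = 0 := haz
        obtain ⟨j, hj⟩ := h1 _ this
        have hj0 : j ≠ 0 := by
          intro hj0
          subst hj0
          omega
        obtain ⟨j', rfl⟩ : ∃ j', j = j'+1 := ⟨j-1, by omega⟩
        refine ⟨j', ?_⟩
        have := hee j'
        show e (j'+1) - (e 0 + 1) = a
        omega)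
      (by
        intro j hj
        rw [hTe] at hj ⊢
        exact hk (j+1) hj)
      (by
        intro j hj
        rw [hTe] at hj ⊢
        exact ht (j+1) hj)
    refine ⟨consW v T', hhead.trans (preach1_consW_lift v hTr), ?_, ?_, ?_⟩
    · intro i hi
      rcases i with _ | i
      · have hi' : 1 ≤ v := hi
        have hz0 : 1 ≤ ζ (e 0) := by
          by_contra hc
          rw [hv, if_pos (by omega)] at hi'
          omega
        show T' 0 = 0
        rcases m with _ | m'
        · have h00 := hTtail 0
          have : T' 0 = T (offE e' 0 + 0) := h00
          rw [this]
          show ζ ((offE e' 0 + 0) + (e 0 + 1)) = 0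
          have : offE e' 0 + 0 + (e 0 + 1) = e 0 + 1 := by
            show (0:ℕ) + 0 + (e 0 + 1) = e 0 + 1
            omega
          rw [this]
          exact hζ (e 0) hz0
        · have := hTpre 0 (by omega)
          rw [this, hTe, hk 0 hz0]
          simp
      · exact hTpsi i hi
    · intro j hj
      rcases j with _ | j
      · show v = if ζ (e 0) = 0 then 0 else t 0
        rw [hv]
      · show T' j = if ζ (e (j+1)) = 0 then 0 else t (j+1)
        rw [hTpre j (by omega), hTe]
    · intro j
      rw [show m+1+j = (m+j)+1 by omega, consW_succ, hTtail j]
      show ζ ((offE e' m + j) + (e 0 + 1)) = ζ (offE e (m+1) + j)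
      congr 1
      show offE e' m + j + (e 0 + 1) = e m + 1 + j
      rcases m with _ | m'
      · show (0:ℕ) + j + (e 0 + 1) = e 0 + 1 + j
        omega
      · show e' m' + 1 + j + (e 0 + 1) = e (m'+1) + 1 + j
        have := hee m'
        omega

lemma Cpsi : ∀ (m : ℕ) (ψ e : ℕ → ℕ),
    Psi ψ → StrictMono e →
    (∀ a, 1 ≤ ψ a → ∃ j, e j = a) →
    (∀ a, 1 ≤ ψ (a+1) → ∃ j, e j = a) →
    (∀ j, 1 ≤ ψ (e j) → ψ (e (j+1)) = 0) →
    ∃ ψ', Safe0 ψ ψ' ∧ Psi ψ' ∧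
      (∀ j, j < m → ψ' j = ψ (e j)) ∧
      (∀ j, ψ' (m + j) = ψ (offE e m + j)) := by
  intro m
  induction m with
  | zero =>
    intro ψ e hψ _ _ _ _
    exact ⟨ψ, Relation.ReflTransGen.refl, hψ, fun j hj => absurd hj (by omega), fun j => rfl⟩
  | succ m IH =>
    intro ψ e hψ he h1 h2 hk
    have hdel : ∀ a, a < e 0 → ψ a = 0 ∧ ψ (a+1) = 0 := by
      intro a ha
      constructor
      · by_contra hc
        obtain ⟨j, hj⟩ := h1 a (by omega)
        have := he.monotone (Nat.zero_le j)
        omega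
      · by_contra hc
        obtain ⟨j, hj⟩ := h2 a (by omega)
        have := he.monotone (Nat.zero_le j)
        omega
    set T : ℕ → ℕ := fun j => ψ (j + (e 0 + 1)) with hT
    set v : ℕ := ψ (e 0) with hv
    have hshift : Safe0 ψ (fun j => ψ (j + e 0)) := safe0_shift (e 0) ψ hdel
    have hhead : Safe0 ψ (consW v T) := by
      have hcw : (fun j => ψ (j + e 0)) = consW v T := by
        funext j
        rcases j with _ | j
        · show ψ (0 + e 0) = v
          rw [hv, show 0 + e 0 = e 0 by omega]
        · show ψ (j+1+e 0) = T j
          rw [hT]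
          show ψ (j+1+e 0) = ψ (j + (e 0 + 1))
          congr 1
          omega
      rw [← hcw]
      exact hshift
    set e' : ℕ → ℕ := fun j => e (j+1) - (e 0 + 1) with he'
    have hee : ∀ j, e' j + (e 0 + 1) = e (j+1) := by
      intro j
      have h' : e 0 < e (j+1) := he (by omega)
      show e (j+1) - (e 0 + 1) + (e 0 + 1) = e (j+1)
      omega
    have hTe : ∀ j, T (e' j) = ψ (e (j+1)) := by
      intro j
      rw [hT]
      show ψ (e' j + (e 0 + 1)) = ψ (e (j+1))
      rw [hee]
    have he'm : StrictMono e' := by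
      intro a b hab
      have h1' : e (a+1) < e (b+1) := he (by omega)
      have h2' : e 0 < e (a+1) := he (by omega)
      show e (a+1) - (e 0 + 1) < e (b+1) - (e 0 + 1)
      omega
    obtain ⟨T', hTr, hTpsi, hTpre, hTtail⟩ := IH T e' (hψ.shiftW _) he'm
      (by
        intro a haz
        have : 1 ≤ ψ (a + (e 0 + 1)) := haz
        obtain ⟨j, hj⟩ := h1 _ this
        have hj0 : j ≠ 0 := by
          intro hj0
          subst hj0
          have : e 0 < a + (e 0 + 1) := by omega
          omega
        obtain ⟨j', rfl⟩ : ∃ j', j = j'+1 := ⟨j-1, by omega⟩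
        refine ⟨j', ?_⟩
        have := hee j'
        show e (j'+1) - (e 0 + 1) = a
        omega)
      (by
        intro a haz
        have : 1 ≤ ψ ((a + e 0 + 1) + 1) := by
          have : 1 ≤ ψ (a + 1 + (e 0 + 1)) := haz
          rw [show a + e 0 + 1 + 1 = a + 1 + (e 0 + 1) by omega]
          exact this
        obtain ⟨j, hj⟩ := h2 _ this
        have hj0 : j ≠ 0 := by
          intro hj0
          subst hj0
          omega
        obtain ⟨j', rfl⟩ : ∃ j', j = j'+1 := ⟨j-1, by omega⟩
        refine ⟨j', ?_⟩
        have := hee j'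
        show e (j'+1) - (e 0 + 1) = a
        omega)
      (by
        intro j hj
        rw [hTe] at hj ⊢
        exact hk (j+1) hj)
    refine ⟨consW v T', hhead.trans (safe0_consW_lift v hTr), ?_, ?_, ?_⟩
    · intro i hi
      rcases i with _ | i
      · have hz0 : 1 ≤ ψ (e 0) := hi
        show T' 0 = 0
        rcases m with _ | m'
        · have h00 := hTtail 0
          have : T' 0 = T (offE e' 0 + 0) := h00
          rw [this]
          show ψ ((offE e' 0 + 0) + (e 0 + 1)) = 0
          have heq : offE e' 0 + 0 + (e 0 + 1) = e 0 + 1 := by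
            show (0:ℕ) + 0 + (e 0 + 1) = e 0 + 1
            omega
          rw [heq]
          exact hψ (e 0) hz0
        · have := hTpre 0 (by omega)
          rw [this, hTe, hk 0 hz0]
      · exact hTpsi i hi
    · intro j hj
      rcases j with _ | j
      · show v = ψ (e 0)
        rw [hv]
      · show T' j = ψ (e (j+1))
        rw [hTpre j (by omega), hTe]
    · intro j
      rw [show m+1+j = (m+j)+1 by omega, consW_succ, hTtail j]
      show ψ ((offE e' m + j) + (e 0 + 1)) = ψ (offE e (m+1) + j)
      congr 1
      show offE e' m + j + (e 0 + 1) = e m + 1 + j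
      rcases m with _ | m'
      · show (0:ℕ) + j + (e 0 + 1) = e 0 + 1 + j
        omega
      · show e' m' + 1 + j + (e 0 + 1) = e (m'+1) + 1 + j
        have := hee m'
        omega


/-! ### Data extracted from the path -/

structure PathData (ζ ψ c : ℕ → ℕ) : Prop where
  mono : Monotone c
  add_le : ∀ a k, c (a + k) ≤ c a + k
  pos : ∀ n, 1 ≤ c (n+1)
  openv : ∀ n, ψ n ≤ ζ (c (n+1) - 1)
  inj : ∀ a b, a < b → 1 ≤ ψ a → 1 ≤ ψ b → c (a+1) ≠ c (b+1)
  cle : ∀ n, c n ≤ n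

section Match

variable (ζ ψ c : ℕ → ℕ)

def muP : ℕ → ℕ := fun a => c (a+1) - 1

def M0P : ℕ → Prop := fun u => ∃ a, 1 ≤ ψ a ∧ muP c a = u

open Classical in
noncomputable def thetaP : ℕ → ℕ := fun u => if h : M0P ψ c u then ψ h.choose else 0

def KzP : ℕ → Prop := fun u => ζ u = 0 ∨ M0P ψ c u

noncomputable def ezP : ℕ → ℕ := Nat.nth (KzP ζ ψ c)

noncomputable def limP : ℕ → ℕ := fun j =>
  if ζ (ezP ζ ψ c j) = 0 then 0 else thetaP ψ c (ezP ζ ψ c j)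

open Classical in
noncomputable def AfP : ℕ → ℕ := fun k =>
  if h : M0P ψ c (ezP ζ ψ c k) then h.choose else 0

open Classical in
noncomputable def epsiP : ℕ → ℕ := fun j =>
  if h : ∃ d, limP ζ ψ c (j + d) ≠ 0 then AfP ζ ψ c (j + Nat.find h) - Nat.find h
  else if _h2 : ∃ k, k < j ∧ limP ζ ψ c k ≠ 0 then
    AfP ζ ψ c (Nat.findGreatest (fun k => limP ζ ψ c k ≠ 0) (j-1))
      + (j - Nat.findGreatest (fun k => limP ζ ψ c k ≠ 0) (j-1))
  else j

end Match

section MatchLemmas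

variable {ζ ψ c : ℕ → ℕ}

lemma sm_add_le {f : ℕ → ℕ} (hf : StrictMono f) (k d : ℕ) : f k + d ≤ f (k + d) := by
  induction d with
  | zero => simp
  | succ d IH =>
    have := hf (show k + d < k + (d+1) by omega)
    omega

lemma mu_le (hp : PathData ζ ψ c) (a : ℕ) : muP c a ≤ a := by
  have := hp.cle (a+1)
  unfold muP
  omega

lemma mu_lt (hp : PathData ζ ψ c) {a b : ℕ} (hab : a < b) (ha : 1 ≤ ψ a) (hb : 1 ≤ ψ b) :
    muP c a < muP c b := by
  have hne := hp.inj a b hab ha hb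
  have hm : c (a+1) ≤ c (b+1) := hp.mono (by omega)
  have h1 := hp.pos a
  have h2 := hp.pos b
  unfold muP
  omega

lemma mu_inj (hp : PathData ζ ψ c) {a b : ℕ} (ha : 1 ≤ ψ a) (hb : 1 ≤ ψ b)
    (h : muP c a = muP c b) : a = b := by
  rcases lt_trichotomy a b with h' | h' | h'
  · have := mu_lt hp h' ha hb; omega
  · exact h'
  · have := mu_lt hp h' hb ha; omega

lemma mu_gap (hp : PathData ζ ψ c) {a b : ℕ} (hab : a ≤ b) :
    muP c b ≤ muP c a + (b - a) := by
  have h1 := hp.add_le (a+1) (b-a)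
  have h2 : a + 1 + (b - a) = b + 1 := by omega
  rw [h2] at h1
  have := hp.pos a
  unfold muP
  omega

lemma mu_psi_le (hp : PathData ζ ψ c) (a : ℕ) : ψ a ≤ ζ (muP c a) := hp.openv a

lemma theta_mu (hp : PathData ζ ψ c) {a : ℕ} (ha : 1 ≤ ψ a) :
    thetaP ψ c (muP c a) = ψ a := by
  have hM : M0P ψ c (muP c a) := ⟨a, ha, rfl⟩
  unfold thetaP
  rw [dif_pos hM]
  obtain ⟨h1, h2⟩ := hM.choose_spec
  rw [mu_inj hp h1 ha h2]

lemma zeros_inf (hζ : Psi ζ) : {u | ζ u = 0}.Infinite := by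
  apply Set.infinite_of_not_bddAbove
  rintro ⟨N, hN⟩
  have h1 : ζ (N+1) = 0 ∨ ζ (N+2) = 0 := by
    by_cases hz : ζ (N+1) = 0
    · exact Or.inl hz
    · exact Or.inr (hζ (N+1) (by omega))
  rcases h1 with hz | hz
  · have := hN (show (N+1) ∈ {u | ζ u = 0} from hz)
    omega
  · have := hN (show (N+2) ∈ {u | ζ u = 0} from hz)
    omega

lemma Kz_inf (hζ : Psi ζ) : {u | KzP ζ ψ c u}.Infinite :=
  (zeros_inf hζ).mono (fun _ hu => Or.inl hu)

lemma ez_mem (hζ : Psi ζ) (k : ℕ) : KzP ζ ψ c (ezP ζ ψ c k) :=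
  Nat.nth_mem_of_infinite (Kz_inf hζ) k

lemma ez_sm (hζ : Psi ζ) : StrictMono (ezP ζ ψ c) :=
  Nat.nth_strictMono (Kz_inf hζ)

lemma ez_surj (hζ : Psi ζ) {u : ℕ} (hu : KzP ζ ψ c u) : ∃ k, ezP ζ ψ c k = u := by
  classical
  exact ⟨Nat.count (KzP ζ ψ c) u, Nat.nth_count hu⟩

lemma ez_next (hζ : Psi ζ) {k : ℕ} (h : KzP ζ ψ c (ezP ζ ψ c k + 1)) :
    ezP ζ ψ c (k+1) = ezP ζ ψ c k + 1 := by
  obtain ⟨k', hk'⟩ := ez_surj hζ h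
  have h1 : k < k' := by
    have h3 : ezP ζ ψ c k < ezP ζ ψ c k + 1 := by omega
    rw [← hk'] at h3
    exact (ez_sm (ψ := ψ) (c := c) hζ).lt_iff_lt.mp h3
  have h2 : ezP ζ ψ c (k+1) ≤ ezP ζ ψ c k' := (ez_sm hζ).monotone (by omega)
  have h3 : ezP ζ ψ c k < ezP ζ ψ c (k+1) := ez_sm hζ (by omega)
  omega

lemma Af_spec (hζ : Psi ζ) {k : ℕ} (h : ζ (ezP ζ ψ c k) ≠ 0) :
    1 ≤ ψ (AfP ζ ψ c k) ∧ muP c (AfP ζ ψ c k) = ezP ζ ψ c k := by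
  have hM : M0P ψ c (ezP ζ ψ c k) := (ez_mem hζ k).resolve_left h
  unfold AfP
  rw [dif_pos hM]
  exact hM.choose_spec

lemma lim_eq_psi_Af (hζ : Psi ζ) (hp : PathData ζ ψ c) {k : ℕ} (h : ζ (ezP ζ ψ c k) ≠ 0) :
    limP ζ ψ c k = ψ (AfP ζ ψ c k) := by
  obtain ⟨h1, h2⟩ := Af_spec hζ h
  unfold limP
  rw [if_neg h, ← h2, theta_mu hp h1]

lemma lim_pos (hζ : Psi ζ) (hp : PathData ζ ψ c) {k : ℕ} (h : ζ (ezP ζ ψ c k) ≠ 0) :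
    1 ≤ limP ζ ψ c k := by
  rw [lim_eq_psi_Af hζ hp h]
  exact (Af_spec hζ h).1

lemma lim_ne_imp {j : ℕ} (h : limP ζ ψ c j ≠ 0) : ζ (ezP ζ ψ c j) ≠ 0 := by
  intro hz
  apply h
  unfold limP
  rw [if_pos hz]

lemma theta_bounds (hζ : Psi ζ) (hp : PathData ζ ψ c) {j : ℕ} (h : 1 ≤ ζ (ezP ζ ψ c j)) :
    1 ≤ thetaP ψ c (ezP ζ ψ c j) ∧ thetaP ψ c (ezP ζ ψ c j) ≤ ζ (ezP ζ ψ c j) := by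
  have hz : ζ (ezP ζ ψ c j) ≠ 0 := by omega
  have he : thetaP ψ c (ezP ζ ψ c j) = limP ζ ψ c j := by
    unfold limP
    rw [if_neg hz]
  obtain ⟨h1, h2⟩ := Af_spec (ψ := ψ) (c := c) hζ hz
  rw [he, lim_eq_psi_Af hζ hp hz]
  constructor
  · exact h1
  · have := mu_psi_le hp (AfP ζ ψ c j)
    rw [h2] at this
    exact this

lemma kept_next (hζ : Psi ζ) : ∀ j, 1 ≤ ζ (ezP ζ ψ c j) → ζ (ezP ζ ψ c (j+1)) = 0 := by
  intro j hj
  have h0 : ζ (ezP ζ ψ c j + 1) = 0 := hζ _ hj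
  rw [ez_next hζ (Or.inl h0)]
  exact h0

lemma psi_lim (hζ : Psi ζ) (hp : PathData ζ ψ c) : Psi (limP ζ ψ c) := by
  intro j hj
  have hz : ζ (ezP ζ ψ c j) ≠ 0 := lim_ne_imp (by omega)
  have h0 := kept_next (ψ := ψ) (c := c) hζ j (by omega)
  unfold limP
  rw [if_pos h0]

lemma Af_lt (hζ : Psi ζ) (hp : PathData ζ ψ c) {k k' : ℕ} (hkk : k < k')
    (h : ζ (ezP ζ ψ c k) ≠ 0) (h' : ζ (ezP ζ ψ c k') ≠ 0) :
    AfP ζ ψ c k < AfP ζ ψ c k' := by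
  obtain ⟨s1, s2⟩ := Af_spec hζ h
  obtain ⟨s1', s2'⟩ := Af_spec hζ h'
  have hmm : muP c (AfP ζ ψ c k) < muP c (AfP ζ ψ c k') := by
    rw [s2, s2']
    exact ez_sm hζ hkk
  rcases lt_trichotomy (AfP ζ ψ c k) (AfP ζ ψ c k') with hh | hh | hh
  · exact hh
  · rw [hh] at hmm; omega
  · have := mu_lt hp hh s1' s1; omega

lemma Af_surj (hζ : Psi ζ) (hp : PathData ζ ψ c) {a : ℕ} (ha : 1 ≤ ψ a) :
    ∃ k, ζ (ezP ζ ψ c k) ≠ 0 ∧ AfP ζ ψ c k = a := by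
  have hKz : KzP ζ ψ c (muP c a) := Or.inr ⟨a, ha, rfl⟩
  obtain ⟨k, hk⟩ := ez_surj hζ hKz
  have hz : ζ (ezP ζ ψ c k) ≠ 0 := by
    rw [hk]
    have := mu_psi_le hp a
    omega
  refine ⟨k, hz, ?_⟩
  obtain ⟨h1, h2⟩ := Af_spec hζ hz
  exact mu_inj hp h1 ha (by rw [h2, hk])

lemma Af_ge (hζ : Psi ζ) (hp : PathData ζ ψ c) {k : ℕ} (h : ζ (ezP ζ ψ c k) ≠ 0) :
    k ≤ AfP ζ ψ c k := by
  have h1 : k ≤ ezP ζ ψ c k := (ez_sm (ψ := ψ) (c := c) hζ).le_apply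
  have h2 := (Af_spec hζ h).2
  have h3 := mu_le hp (AfP ζ ψ c k)
  omega

lemma Af_gap (hζ : Psi ζ) (hp : PathData ζ ψ c) {k k' : ℕ} (hkk : k ≤ k')
    (h : ζ (ezP ζ ψ c k) ≠ 0) (h' : ζ (ezP ζ ψ c k') ≠ 0) :
    AfP ζ ψ c k + (k' - k) ≤ AfP ζ ψ c k' := by
  rcases eq_or_lt_of_le hkk with rfl | hlt
  · omega
  · have e1 : ezP ζ ψ c k + (k' - k) ≤ ezP ζ ψ c k' := by
      have := sm_add_le (ez_sm (ψ := ψ) (c := c) hζ) k (k' - k)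
      rw [show k + (k' - k) = k' by omega] at this
      exact this
    have hA : AfP ζ ψ c k < AfP ζ ψ c k' := Af_lt hζ hp hlt h h'
    have g1 := mu_gap (b := AfP ζ ψ c k') (a := AfP ζ ψ c k) hp (by omega)
    rw [(Af_spec hζ h).2, (Af_spec hζ h').2] at g1
    omega

lemma psi_zero_between (hζ : Psi ζ) (hp : PathData ζ ψ c) {k k' b : ℕ} (hkk : k < k')
    (h : ζ (ezP ζ ψ c k) ≠ 0) (h' : ζ (ezP ζ ψ c k') ≠ 0)
    (hmid : ∀ i, k < i → i < k' → limP ζ ψ c i = 0)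
    (hb1 : AfP ζ ψ c k < b) (hb2 : b < AfP ζ ψ c k') : ψ b = 0 := by
  by_contra hc
  obtain ⟨i, hzi, hAi⟩ := Af_surj hζ hp (show 1 ≤ ψ b by omega)
  have hik : k < i := by
    rcases lt_trichotomy k i with hh | hh | hh
    · exact hh
    · subst hh; omega
    · have := Af_lt hζ hp hh hzi h; omega
  have hik' : i < k' := by
    rcases lt_trichotomy i k' with hh | hh | hh
    · exact hh
    · subst hh; omega
    · have := Af_lt hζ hp hh h' hzi; omega
  have := hmid i hik hik'
  have := lim_pos hζ hp hzi
  omega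

lemma psi_zero_before (hζ : Psi ζ) (hp : PathData ζ ψ c) {k b : ℕ}
    (h : ζ (ezP ζ ψ c k) ≠ 0) (hfirst : ∀ i, i < k → limP ζ ψ c i = 0)
    (hb : b < AfP ζ ψ c k) : ψ b = 0 := by
  by_contra hc
  obtain ⟨i, hzi, hAi⟩ := Af_surj hζ hp (show 1 ≤ ψ b by omega)
  have hik : i < k := by
    rcases lt_trichotomy i k with hh | hh | hh
    · exact hh
    · subst hh; omega
    · have := Af_lt hζ hp hh h hzi; omega
  have := hfirst i hik
  have := lim_pos hζ hp hzi
  omega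

lemma psi_zero_after (hζ : Psi ζ) (hp : PathData ζ ψ c) {k b : ℕ}
    (h : ζ (ezP ζ ψ c k) ≠ 0) (hlast : ∀ i, k < i → limP ζ ψ c i = 0)
    (hb : AfP ζ ψ c k < b) : ψ b = 0 := by
  by_contra hc
  obtain ⟨i, hzi, hAi⟩ := Af_surj hζ hp (show 1 ≤ ψ b by omega)
  have hik : k < i := by
    rcases lt_trichotomy k i with hh | hh | hh
    · exact hh
    · subst hh; omega
    · have := Af_lt hζ hp hh hzi h; omega
  have := hlast i hik
  have := lim_pos hζ hp hzi
  omega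

lemma psi_zero_all (hζ : Psi ζ) (hp : PathData ζ ψ c)
    (hall : ∀ i, limP ζ ψ c i = 0) (b : ℕ) : ψ b = 0 := by
  by_contra hc
  obtain ⟨i, hzi, _⟩ := Af_surj hζ hp (show 1 ≤ ψ b by omega)
  have := lim_pos hζ hp hzi
  have := hall i
  omega

end MatchLemmas


section EpsiLemmas

variable {ζ ψ c : ℕ → ℕ}

lemma epsi_eq_fwd {j d : ℕ} (hd : limP ζ ψ c (j + d) ≠ 0)
    (hmin : ∀ d', d' < d → limP ζ ψ c (j + d') = 0) :
    epsiP ζ ψ c j = AfP ζ ψ c (j + d) - d := by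
  unfold epsiP
  have hex : ∃ d', limP ζ ψ c (j + d') ≠ 0 := ⟨d, hd⟩
  rw [dif_pos hex]
  have hfind : Nat.find hex = d := by
    rw [Nat.find_eq_iff]
    exact ⟨hd, fun d' hd' => not_not.2 (hmin d' hd')⟩
  rw [hfind]

lemma epsi_eq_bwd {j k₁ : ℕ} (hnofwd : ∀ d, limP ζ ψ c (j + d) = 0) (hk₁ : k₁ < j)
    (h : limP ζ ψ c k₁ ≠ 0) (hgr : ∀ i, k₁ < i → i < j → limP ζ ψ c i = 0) :
    epsiP ζ ψ c j = AfP ζ ψ c k₁ + (j - k₁) := by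
  unfold epsiP
  rw [dif_neg (by push_neg; exact hnofwd)]
  have hex : ∃ k, k < j ∧ limP ζ ψ c k ≠ 0 := ⟨k₁, hk₁, h⟩
  rw [dif_pos hex]
  have hfg : Nat.findGreatest (fun k => limP ζ ψ c k ≠ 0) (j-1) = k₁ := by
    rw [Nat.findGreatest_eq_iff]
    refine ⟨by omega, fun _ => h, ?_⟩
    intro n hn hn2
    exact not_not.2 (hgr n hn (by omega))
  rw [hfg]

lemma epsi_eq_none {j : ℕ} (hnofwd : ∀ d, limP ζ ψ c (j + d) = 0)
    (hnobwd : ∀ k, k < j → limP ζ ψ c k = 0) : epsiP ζ ψ c j = j := by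
  unfold epsiP
  rw [dif_neg (by push_neg; exact hnofwd), dif_neg (by push_neg; exact hnobwd)]

lemma epsi_val (hζ : Psi ζ) (hp : PathData ζ ψ c) (j : ℕ) :
    ψ (epsiP ζ ψ c j) = limP ζ ψ c j := by
  classical
  by_cases hf : ∃ d, limP ζ ψ c (j + d) ≠ 0
  · have hd : limP ζ ψ c (j + Nat.find hf) ≠ 0 := Nat.find_spec hf
    have hmin : ∀ d', d' < Nat.find hf → limP ζ ψ c (j + d') = 0 := fun d' h' =>
      not_not.1 (Nat.find_min hf h')
    rw [epsi_eq_fwd hd hmin]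
    have hzK : ζ (ezP ζ ψ c (j + Nat.find hf)) ≠ 0 := lim_ne_imp hd
    rcases Nat.eq_zero_or_pos (Nat.find hf) with h0 | h0
    · rw [h0, Nat.add_zero, Nat.sub_zero]
      exact (lim_eq_psi_Af hζ hp (by rwa [h0, Nat.add_zero] at hzK)).symm
    · have hlj : limP ζ ψ c j = 0 := by
        have := hmin 0 h0
        rwa [Nat.add_zero] at this
      rw [hlj]
      have hge : j + Nat.find hf ≤ AfP ζ ψ c (j + Nat.find hf) := Af_ge hζ hp hzK
      by_cases hb : ∃ k, k < j ∧ limP ζ ψ c k ≠ 0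
      · obtain ⟨kw, hkw1, hkw2⟩ := hb
        set k₁ := Nat.findGreatest (fun k => limP ζ ψ c k ≠ 0) (j-1) with hk₁d
        have hk₁p : limP ζ ψ c k₁ ≠ 0 := by
          rw [hk₁d]
          exact Nat.findGreatest_spec (P := fun k => limP ζ ψ c k ≠ 0) (n := j-1) (m := kw) (by omega) hkw2
        have hk₁le : k₁ ≤ j - 1 := by
          rw [hk₁d]
          exact Nat.findGreatest_le _
        have hk₁lt : k₁ < j := by omega
        have hmid : ∀ i, k₁ < i → i < j + Nat.find hf → limP ζ ψ c i = 0 := by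
          intro i h1 h2
          rcases lt_or_ge i j with hij | hij
          · rw [hk₁d] at h1
            exact not_not.1 (Nat.findGreatest_is_greatest h1 (by omega))
          · have := hmin (i - j) (by omega)
            rwa [show j + (i - j) = i by omega] at this
        have hzk₁ : ζ (ezP ζ ψ c k₁) ≠ 0 := lim_ne_imp hk₁p
        have hg := Af_gap hζ hp (show k₁ ≤ j + Nat.find hf by omega) hzk₁ hzK
        exact psi_zero_between hζ hp (show k₁ < j + Nat.find hf by omega) hzk₁ hzK hmid
          (by omega) (by omega)
      · push_neg at hb
        have hfirst : ∀ i, i < j + Nat.find hf → limP ζ ψ c i = 0 := by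
          intro i hi
          rcases lt_or_ge i j with hij | hij
          · exact hb i hij
          · have := hmin (i - j) (by omega)
            rwa [show j + (i - j) = i by omega] at this
        exact psi_zero_before hζ hp hzK hfirst (by omega)
  · push_neg at hf
    have hlj : limP ζ ψ c j = 0 := by have := hf 0; rwa [Nat.add_zero] at this
    rw [hlj]
    by_cases hb : ∃ k, k < j ∧ limP ζ ψ c k ≠ 0
    · obtain ⟨kw, hkw1, hkw2⟩ := hb
      set k₁ := Nat.findGreatest (fun k => limP ζ ψ c k ≠ 0) (j-1) with hk₁d
      have hk₁p : limP ζ ψ c k₁ ≠ 0 := by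
        rw [hk₁d]
        exact Nat.findGreatest_spec (P := fun k => limP ζ ψ c k ≠ 0) (n := j-1) (m := kw) (by omega) hkw2
      have hk₁le : k₁ ≤ j - 1 := by
        rw [hk₁d]
        exact Nat.findGreatest_le _
      have hk₁lt : k₁ < j := by omega
      have hgr : ∀ i, k₁ < i → i < j → limP ζ ψ c i = 0 := by
        intro i h1 h2
        rw [hk₁d] at h1
        exact not_not.1 (Nat.findGreatest_is_greatest h1 (by omega))
      rw [epsi_eq_bwd hf hk₁lt hk₁p hgr]
      have hlast : ∀ i, k₁ < i → limP ζ ψ c i = 0 := by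
        intro i h1
        rcases lt_or_ge i j with hij | hij
        · exact hgr i h1 hij
        · have := hf (i - j)
          rwa [show j + (i - j) = i by omega] at this
      exact psi_zero_after hζ hp (lim_ne_imp hk₁p) hlast (by omega)
    · push_neg at hb
      rw [epsi_eq_none hf hb]
      refine psi_zero_all hζ hp ?_ j
      intro i
      rcases lt_or_ge i j with hij | hij
      · exact hb i hij
      · have := hf (i - j)
        rwa [show j + (i - j) = i by omega] at this

lemma epsi_sm (hζ : Psi ζ) (hp : PathData ζ ψ c) : StrictMono (epsiP ζ ψ c) := by
  apply strictMono_nat_of_lt_succ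
  intro j
  classical
  by_cases hf : ∃ d, limP ζ ψ c (j + d) ≠ 0
  · have hd : limP ζ ψ c (j + Nat.find hf) ≠ 0 := Nat.find_spec hf
    have hmin : ∀ d', d' < Nat.find hf → limP ζ ψ c (j + d') = 0 := fun d' h' =>
      not_not.1 (Nat.find_min hf h')
    have hend := epsi_eq_fwd hd hmin
    rcases Nat.eq_zero_or_pos (Nat.find hf) with h0 | h0
    · have hdj : limP ζ ψ c j ≠ 0 := by rwa [h0, Nat.add_zero] at hd
      have hj' : epsiP ζ ψ c j = AfP ζ ψ c j := by
        rw [hend, h0, Nat.add_zero, Nat.sub_zero]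
      have hzj : ζ (ezP ζ ψ c j) ≠ 0 := lim_ne_imp hdj
      by_cases hf1 : ∃ d, limP ζ ψ c (j + 1 + d) ≠ 0
      · have hd1 : limP ζ ψ c (j + 1 + Nat.find hf1) ≠ 0 := Nat.find_spec hf1
        have hmin1 : ∀ d', d' < Nat.find hf1 → limP ζ ψ c (j + 1 + d') = 0 := fun d' h' =>
          not_not.1 (Nat.find_min hf1 h')
        have h2 := epsi_eq_fwd hd1 hmin1
        have hzK : ζ (ezP ζ ψ c (j + 1 + Nat.find hf1)) ≠ 0 := lim_ne_imp hd1
        have hgap := Af_gap hζ hp (show j ≤ j + 1 + Nat.find hf1 by omega) hzj hzK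
        rw [hj', h2]
        omega
      · push_neg at hf1
        have h2 := epsi_eq_bwd (j := j+1) (k₁ := j) hf1 (by omega) hdj
          (fun i h1 h2 => absurd h1 (by omega))
        rw [hj', h2]
        omega
    · have hd1 : limP ζ ψ c (j + 1 + (Nat.find hf - 1)) ≠ 0 := by
        rwa [show j + 1 + (Nat.find hf - 1) = j + Nat.find hf by omega]
      have hmin1 : ∀ d', d' < Nat.find hf - 1 → limP ζ ψ c (j + 1 + d') = 0 := by
        intro d' h'
        have := hmin (d' + 1) (by omega)
        rwa [show j + (d' + 1) = j + 1 + d' by omega] at this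
      have h2 := epsi_eq_fwd hd1 hmin1
      have hzK : ζ (ezP ζ ψ c (j + Nat.find hf)) ≠ 0 := lim_ne_imp hd
      have hge := Af_ge hζ hp hzK
      rw [hend, h2, show j + 1 + (Nat.find hf - 1) = j + Nat.find hf by omega]
      omega
  · push_neg at hf
    have hf1 : ∀ d, limP ζ ψ c (j + 1 + d) = 0 := by
      intro d
      have := hf (d + 1)
      rwa [show j + (d+1) = j + 1 + d by omega] at this
    have hlj : limP ζ ψ c j = 0 := by have := hf 0; rwa [Nat.add_zero] at this
    by_cases hb : ∃ k, k < j ∧ limP ζ ψ c k ≠ 0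
    · obtain ⟨kw, hkw1, hkw2⟩ := hb
      set k₁ := Nat.findGreatest (fun k => limP ζ ψ c k ≠ 0) (j-1) with hk₁d
      have hk₁p : limP ζ ψ c k₁ ≠ 0 := by
        rw [hk₁d]
        exact Nat.findGreatest_spec (P := fun k => limP ζ ψ c k ≠ 0) (n := j-1) (m := kw) (by omega) hkw2
      have hk₁le : k₁ ≤ j - 1 := by
        rw [hk₁d]
        exact Nat.findGreatest_le _
      have hk₁lt : k₁ < j := by omega
      have hgr : ∀ i, k₁ < i → i < j → limP ζ ψ c i = 0 := by
        intro i h1 h2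
        rw [hk₁d] at h1
        exact not_not.1 (Nat.findGreatest_is_greatest h1 (by omega))
      have e1 := epsi_eq_bwd hf hk₁lt hk₁p hgr
      have hgr1 : ∀ i, k₁ < i → i < j + 1 → limP ζ ψ c i = 0 := by
        intro i h1 h2
        rcases lt_or_ge i j with hij | hij
        · exact hgr i h1 hij
        · have : i = j := by omega
          rw [this]
          exact hlj
      have e2 := epsi_eq_bwd hf1 (show k₁ < j + 1 by omega) hk₁p hgr1
      rw [e1, e2]
      omega
    · push_neg at hb
      have e1 := epsi_eq_none hf hb
      have hb1 : ∀ k, k < j + 1 → limP ζ ψ c k = 0 := by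
        intro k hk
        rcases lt_or_ge k j with h' | h'
        · exact hb k h'
        · have : k = j := by omega
          rw [this]
          exact hlj
      have e2 := epsi_eq_none hf1 hb1
      rw [e1, e2]
      omega

lemma epsi_of_pos (hζ : Psi ζ) (hp : PathData ζ ψ c) {b : ℕ} (hb : 1 ≤ ψ b) :
    ∃ k, epsiP ζ ψ c k = b := by
  obtain ⟨k, hz, hA⟩ := Af_surj hζ hp hb
  refine ⟨k, ?_⟩
  have hd : limP ζ ψ c (k + 0) ≠ 0 := by
    rw [Nat.add_zero]
    have := lim_pos hζ hp hz
    omega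
  rw [epsi_eq_fwd hd (fun d' h' => absurd h' (by omega)), Nat.add_zero, Nat.sub_zero, hA]

lemma epsi_of_prepos (hζ : Psi ζ) (hp : PathData ζ ψ c) {b : ℕ} (hb : 1 ≤ ψ (b+1))
    (hge : epsiP ζ ψ c 0 ≤ b) : ∃ k, epsiP ζ ψ c k = b := by
  obtain ⟨k, hz, hA⟩ := Af_surj hζ hp hb
  have hlk : limP ζ ψ c k ≠ 0 := by
    have := lim_pos hζ hp hz
    omega
  rcases Nat.eq_zero_or_pos k with rfl | hkpos
  · exfalso
    have h0 : epsiP ζ ψ c 0 = b + 1 := by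
      have hd : limP ζ ψ c (0 + 0) ≠ 0 := by rwa [Nat.add_zero]
      rw [epsi_eq_fwd hd (fun d' h' => absurd h' (by omega)), Nat.add_zero, Nat.sub_zero, hA]
    omega
  · obtain ⟨k', rfl⟩ : ∃ k', k = k' + 1 := ⟨k - 1, by omega⟩
    refine ⟨k', ?_⟩
    have hd : limP ζ ψ c (k' + 1) ≠ 0 := hlk
    have hmin : ∀ d', d' < 1 → limP ζ ψ c (k' + d') = 0 := by
      intro d' h'
      have hd0 : d' = 0 := by omega
      subst hd0
      rw [Nat.add_zero]
      by_contra hcc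
      have h1 : 1 ≤ limP ζ ψ c k' := by omega
      exact hlk (psi_lim hζ hp k' h1)
    rw [epsi_eq_fwd (d := 1) hd hmin, hA]
    omega

lemma epsi_drop (hζ : Psi ζ) (hp : PathData ζ ψ c) {a : ℕ} (ha : a < epsiP ζ ψ c 0) :
    ψ a = 0 := by
  classical
  by_cases hf : ∃ d, limP ζ ψ c (0 + d) ≠ 0
  · have hd := Nat.find_spec hf
    have hmin : ∀ d', d' < Nat.find hf → limP ζ ψ c (0 + d') = 0 := fun d' h' =>
      not_not.1 (Nat.find_min hf h')
    have he := epsi_eq_fwd hd hmin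
    rw [he] at ha
    have hzK : ζ (ezP ζ ψ c (0 + Nat.find hf)) ≠ 0 := lim_ne_imp hd
    refine psi_zero_before hζ hp hzK ?_ (by omega)
    intro i hi
    have := hmin i (by omega)
    rwa [Nat.zero_add] at this
  · have h0 : epsiP ζ ψ c 0 = 0 := by
      push_neg at hf
      exact epsi_eq_none hf (fun k hk => absurd hk (by omega))
    omega

end EpsiLemmas

lemma tendsto_of_prefix {ws : ℕ → ℕ → ℕ} {l : ℕ → ℕ}
    (h : ∀ m j, j < m → ws m j = l j) : Tendsto ws atTop (nhds l) := by
  rw [tendsto_pi_nhds]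
  intro i
  have hev : ∀ᶠ m in atTop, ws m i = l i :=
    Filter.eventually_atTop.2 ⟨i+1, fun m hm => h m i (by omega)⟩
  exact Tendsto.congr' (by filter_upwards [hev] with m hm using hm.symm) tendsto_const_nhds

theorem statement_3 (ζ ψ : ℕ → ℕ) (hζ : Psi ζ) (hψ : Psi ψ)
    (h : InfOpenPermitted ζ ψ) : CompatibleP ζ ψ := by
  obtain ⟨π, hπ0, hstep, hopen, hperm⟩ := h
  have hsnd : ∀ n, (π n).2 = n := by
    intro n
    induction n with
    | zero => rw [hπ0]
    | succ n IH =>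
      rcases hstep n with ⟨_, h2⟩ | ⟨_, h2⟩ <;> rw [h2, IH]
  set c : ℕ → ℕ := fun n => (π n).1 with hcdef
  have hcs : ∀ n, c (n+1) = c n ∨ c (n+1) = c n + 1 := by
    intro n
    rcases hstep n with ⟨h1, _⟩ | ⟨h1, _⟩
    · exact Or.inl h1
    · exact Or.inr h1
  have hmono : Monotone c := monotone_nat_of_le_succ (fun n => by rcases hcs n with h | h <;> omega)
  have haddle : ∀ a k, c (a + k) ≤ c a + k := by
    intro a k
    induction k with
    | zero => simp
    | succ k IH =>
      have h2 : c ((a+k)+1) ≤ c (a+k) + 1 := by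
        rcases hcs (a+k) with h' | h' <;> omega
      have he : a + (k+1) = (a+k)+1 := by omega
      rw [he]
      omega
  have hc0 : c 0 = 0 := by
    show (π 0).1 = 0
    rw [hπ0]
  have hcle : ∀ n, c n ≤ n := by
    intro n
    have := haddle 0 n
    rw [Nat.zero_add] at this
    omega
  have hpo : ∀ n, 1 ≤ c (n+1) ∧ ψ n ≤ ζ (c (n+1) - 1) := by
    intro n
    rcases hopen (n+1) with h | ⟨h1, _h2, h3⟩
    · exfalso
      have h2 := hsnd (n+1)
      rw [h] at h2
      simp at h2
    · refine ⟨h1, ?_⟩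
      have hs := hsnd (n+1)
      rw [hs] at h3
      exact (by simpa using h3)
  have hinj : ∀ a b, a < b → 1 ≤ ψ a → 1 ≤ ψ b → c (a+1) ≠ c (b+1) := by
    intro a b hab ha hb
    have hne : π (a+1) ≠ π (b+1) := by
      intro he
      have h1 := hsnd (a+1)
      rw [he, hsnd (b+1)] at h1
      omega
    have hha : Heavy ψ (π (a+1)) := by
      right
      rw [hsnd (a+1)]
      simpa using ha
    have hhb : Heavy ψ (π (b+1)) := by
      right
      rw [hsnd (b+1)]
      simpa using hb
    exact hperm (a+1) (b+1) hne hha hhb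
  have hp : PathData ζ ψ c :=
    ⟨hmono, haddle, fun n => (hpo n).1, fun n => (hpo n).2, hinj, hcle⟩
  have hZ : ∀ m, ∃ ζ', PReach1 ζ ζ' ∧ Psi ζ' ∧ ∀ j, j < m → ζ' j = limP ζ ψ c j := by
    intro m
    obtain ⟨ζ', h1, h2, h3, _⟩ := Czeta m ζ (ezP ζ ψ c) (fun j => thetaP ψ c (ezP ζ ψ c j)) hζ
      (ez_sm hζ) (fun a ha => ez_surj hζ (Or.inl ha)) (kept_next hζ)
      (fun j hj => theta_bounds hζ hp hj)
    exact ⟨ζ', h1, h2, fun j hj => by rw [h3 j hj]; rfl⟩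
  have hY : ∀ m, ∃ ψ', PReach0 ψ ψ' ∧ Psi ψ' ∧ ∀ j, j < m → ψ' j = limP ζ ψ c j := by
    intro m
    have hdrop : PReach0 ψ (fun a => ψ (a + epsiP ζ ψ c 0)) :=
      preach0_shift _ ψ (fun a ha => epsi_drop hζ hp ha)
    have hsm := epsi_sm hζ hp
    have hle0 : ∀ j, epsiP ζ ψ c 0 ≤ epsiP ζ ψ c j := fun j => hsm.monotone (Nat.zero_le j)
    have he'v : ∀ j, epsiP ζ ψ c j - epsiP ζ ψ c 0 + epsiP ζ ψ c 0 = epsiP ζ ψ c j := by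
      intro j
      have := hle0 j
      omega
    have hvv : ∀ i, ψ (epsiP ζ ψ c i - epsiP ζ ψ c 0 + epsiP ζ ψ c 0) = limP ζ ψ c i := by
      intro i
      rw [he'v i]
      exact epsi_val hζ hp i
    obtain ⟨ψ', h1, h2, h3, _⟩ := Cpsi m (fun a => ψ (a + epsiP ζ ψ c 0))
      (fun j => epsiP ζ ψ c j - epsiP ζ ψ c 0) (hψ.shiftW _)
      (fun a b hab => by
        have h1 := hsm hab
        have h2 := hle0 a
        show epsiP ζ ψ c a - epsiP ζ ψ c 0 < epsiP ζ ψ c b - epsiP ζ ψ c 0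
        omega)
      (fun a ha => by
        obtain ⟨k, hk⟩ := epsi_of_pos hζ hp (show 1 ≤ ψ (a + epsiP ζ ψ c 0) from ha)
        refine ⟨k, ?_⟩
        show epsiP ζ ψ c k - epsiP ζ ψ c 0 = a
        have := hle0 k
        omega)
      (fun a ha => by
        have hb : 1 ≤ ψ ((a + epsiP ζ ψ c 0) + 1) := by
          rw [show (a + epsiP ζ ψ c 0) + 1 = a + 1 + epsiP ζ ψ c 0 by omega]
          exact ha
        obtain ⟨k, hk⟩ := epsi_of_prepos hζ hp hb (show epsiP ζ ψ c 0 ≤ a + epsiP ζ ψ c 0 by omega)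
        refine ⟨k, ?_⟩
        show epsiP ζ ψ c k - epsiP ζ ψ c 0 = a
        have := hle0 k
        omega)
      (fun j hj => by
        have hj' : 1 ≤ ψ (epsiP ζ ψ c j - epsiP ζ ψ c 0 + epsiP ζ ψ c 0) := hj
        rw [hvv j] at hj'
        show ψ (epsiP ζ ψ c (j+1) - epsiP ζ ψ c 0 + epsiP ζ ψ c 0) = 0
        rw [hvv (j+1)]
        exact psi_lim hζ hp j hj')
    refine ⟨ψ', hdrop.trans h1.toPReach0, h2, fun j hj => ?_⟩
    rw [h3 j hj]
    exact hvv j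
  choose ζs hζs1 hζs2 hζs3 using hZ
  choose ψs hψs1 hψs2 hψs3 using hY
  exact ⟨ζs, ψs, limP ζ ψ c, hζs1, hψs1, hζs2, hψs2,
    tendsto_of_prefix (fun m j hj => hζs3 m j hj),
    tendsto_of_prefix (fun m j hj => hψs3 m j hj)⟩


end Paper
end

section
/- Let L ≥ 2 and M ≥ 3(L+1) be integers, ζ = ζ(L), k ≥ 1, and ψ ∈ Ψ_M^k with i_k(ψ) < ∞. Then for every m ∈ ℤ_+: (i) V_{⟨θ_{mL^k}ζ, ψ⟩}(i_k(ψ)−1) is a horizontal discrete segment; (ii) its left endpoint satisfies l(V_{⟨θ_{mL^k}ζ, ψ⟩}(i_k(ψ)−1)) ≤ max{Σ_{r=1}^{k−1}(L^r+1)⌊(i_k(ψ)−1)/M^r⌋, 1}; (iii) its right endpoint satisfies r(V_{⟨θ_{mL^k}ζ, ψ⟩}(i_k(ψ)−1)) ≥ i_k(ψ) − max{Σ_{r=1}^{k−1}(L^r+1)⌊(i_k(ψ)−1)/M^r⌋, 1} (with the convention that an empty sum is 0). -/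
open Filter Set MeasureTheory
open scoped ENNReal NNReal

namespace Paper

/-! ### Auxiliary development for `statement_8` -/

section Statement8Aux

/-- Heavy row predicate (row `j` of the percolation picture, `0` = origin row). -/
def HvRow (ψ : ℕ → ℕ) (j : ℕ) : Prop := j = 0 ∨ 1 ≤ ψ (j - 1)

/-- Column profile of an open permitted path, in divisibility form. -/
def IsProf (L : ℕ) (ψ : ℕ → ℕ) (c : ℕ) (f : ℕ → ℕ) : Prop :=
  f 0 = 0 ∧ (∀ j, j < c → f (j + 1) = f j ∨ f (j + 1) = f j + 1) ∧
    (∀ j, 1 ≤ j → j ≤ c → L ^ ψ (j - 1) ∣ f j) ∧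
    (∀ i j, i < j → j ≤ c → HvRow ψ i → HvRow ψ j → f i < f j)

def Prof (L : ℕ) (ψ : ℕ → ℕ) (c x : ℕ) : Prop := ∃ f, IsProf L ψ c f ∧ f c = x

/-- The error term `Σ_{r=1}^{ℓ-1} (L^r+1) ⌊c/M^r⌋`. -/
def Sig (L M ℓ c : ℕ) : ℕ := ∑ r ∈ Finset.Icc 1 (ℓ - 1), (L ^ r + 1) * (c / M ^ r)

lemma steps_mono {f : ℕ → ℕ} {c : ℕ}
    (h : ∀ j, j < c → f (j + 1) = f j ∨ f (j + 1) = f j + 1) :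
    ∀ j, j ≤ c → ∀ i, i ≤ j → f i ≤ f j := by
  intro j
  induction j with
  | zero =>
    intro _ i hi
    have : i = 0 := by omega
    subst this; exact le_rfl
  | succ p ih =>
    intro hp i hi
    rcases Nat.eq_or_lt_of_le hi with rfl | hlt
    · exact le_rfl
    · have h1 := ih (by omega) i (by omega)
      rcases h p (by omega) with h2 | h2 <;> omega

lemma steps_lip {f : ℕ → ℕ} {c : ℕ}
    (h : ∀ j, j < c → f (j + 1) = f j ∨ f (j + 1) = f j + 1) :
    ∀ j, j ≤ c → f j ≤ f 0 + j := by
  intro j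
  induction j with
  | zero => intro _; omega
  | succ p ih =>
    intro hp
    have h1 := ih (by omega)
    rcases h p (by omega) with h2 | h2 <;> omega

lemma isProf_mono {L : ℕ} {ψ : ℕ → ℕ} {c c' : ℕ} {f : ℕ → ℕ}
    (h : IsProf L ψ c f) (hc : c' ≤ c) : IsProf L ψ c' f :=
  ⟨h.1, fun j hj => h.2.1 j (by omega), fun j h1 h2 => h.2.2.1 j h1 (by omega),
   fun i j h1 h2 => h.2.2.2 i j h1 (by omega)⟩

lemma prof_all_light {L : ℕ} {ψ : ℕ → ℕ} {c : ℕ} (hlight : ∀ i, i < c → ψ i = 0) (x : ℕ) :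
    Prof L ψ c x ↔ x ≤ c := by
  constructor
  · rintro ⟨f, hf, rfl⟩
    have h1 := steps_lip hf.2.1 c le_rfl
    have h0 := hf.1
    omega
  · intro hx
    refine ⟨fun j => j - min j (c - x), ⟨by simp, ?_, ?_, ?_⟩, by
      show c - min c (c - x) = x
      omega⟩
    · intro j hj
      show j + 1 - min (j + 1) (c - x) = j - min j (c - x) ∨
        j + 1 - min (j + 1) (c - x) = j - min j (c - x) + 1
      omega
    · intro j h1 h2
      rw [hlight (j - 1) (by omega)]
      simp
    · intro i j hij hjc hHi hHj
      rcases hHj with h | h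
      · omega
      · rw [hlight (j - 1) (by omega)] at h; omega

lemma prof_step_up {L : ℕ} {ψ : ℕ → ℕ} {t a : ℕ}
    (h : Prof L ψ t a) (hdvd : L ^ ψ t ∣ a + 1) : Prof L ψ (t + 1) (a + 1) := by
  obtain ⟨f, ⟨h0, hst, hdv, hpm⟩, hfc⟩ := h
  have hmono := steps_mono hst
  refine ⟨fun j => if j ≤ t then f j else a + 1, ⟨?_, ?_, ?_, ?_⟩, ?_⟩
  · simp [h0]
  · intro j hj
    rcases Nat.lt_or_ge j t with h1 | h1
    · simp only [if_pos (by omega : j ≤ t), if_pos (by omega : j + 1 ≤ t)]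
      exact hst j h1
    · have hjt : j = t := by omega
      subst hjt
      simp only [if_pos le_rfl, if_neg (by omega : ¬ j + 1 ≤ j)]
      right; omega
  · intro j h1 h2
    rcases Nat.lt_or_ge t j with h3 | h3
    · have hj : j = t + 1 := by omega
      subst hj
      simp only [if_neg (by omega : ¬ t + 1 ≤ t), Nat.add_sub_cancel]
      exact hdvd
    · simp only [if_pos h3]
      exact hdv j h1 h3
  · intro i j hij hjc hHi hHj
    rcases Nat.lt_or_ge t j with h3 | h3
    · have hj : j = t + 1 := by omega
      subst hj
      simp only [if_pos (by omega : i ≤ t), if_neg (by omega : ¬ t + 1 ≤ t)]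
      have := hmono t le_rfl i (by omega)
      omega
    · simp only [if_pos (by omega : i ≤ t), if_pos h3]
      exact hpm i j hij h3 hHi hHj
  · simp only [if_neg (by omega : ¬ t + 1 ≤ t)]

lemma prof_step_down {L : ℕ} {ψ : ℕ → ℕ} {t x₀ : ℕ} (h : Prof L ψ (t + 1) x₀) :
    L ^ ψ t ∣ x₀ ∧ ∃ a, Prof L ψ t a ∧ (x₀ = a ∨ x₀ = a + 1) := by
  obtain ⟨f, hf, hfc⟩ := h
  have hdv := hf.2.2.1 (t + 1) (by omega) le_rfl
  rw [Nat.add_sub_cancel] at hdv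
  refine ⟨hfc ▸ hdv, f t, ⟨f, isProf_mono hf (by omega), rfl⟩, ?_⟩
  have := hf.2.1 t (by omega)
  omega

lemma hv_shift {ψ : ℕ → ℕ} {t : ℕ} (hw : 1 ≤ ψ t) {i : ℕ}
    (h : HvRow (shiftSeq (t + 1) ψ) i) : HvRow ψ (i + (t + 1)) := by
  right
  by_cases h0 : i = 0
  · subst h0
    simpa using hw
  · rcases h with h | h
    · omega
    · rw [show i + (t + 1) - 1 = i - 1 + (t + 1) from by omega]
      simpa [shiftSeq] using h

lemma hv_unshift {ψ : ℕ → ℕ} {t i : ℕ} (hi : 1 ≤ i) (h : HvRow ψ (i + (t + 1))) :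
    HvRow (shiftSeq (t + 1) ψ) i := by
  rcases h with h | h
  · omega
  · right
    rw [show i + (t + 1) - 1 = i - 1 + (t + 1) from by omega] at h
    simpa [shiftSeq] using h

lemma prof_split {L : ℕ} {ψ : ℕ → ℕ} {t c' : ℕ} (hc' : 1 ≤ c') (hw : 1 ≤ ψ t)
    (hdom : ∀ i, t < i → i < t + 1 + c' → ψ i ≤ ψ t) (x : ℕ) :
    Prof L ψ (t + 1 + c') x ↔
      ∃ x₀ y, Prof L ψ (t + 1) x₀ ∧ Prof L (shiftSeq (t + 1) ψ) c' y ∧ x = x₀ + y := by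
  constructor
  · rintro ⟨f, hf, rfl⟩
    obtain ⟨h0, hst, hdv, hpm⟩ := hf
    have hmono := steps_mono hst
    refine ⟨f (t + 1), f (t + 1 + c') - f (t + 1),
      ⟨f, isProf_mono ⟨h0, hst, hdv, hpm⟩ (by omega), rfl⟩,
      ⟨fun j => f (j + (t + 1)) - f (t + 1), ⟨?_, ?_, ?_, ?_⟩, ?_⟩, ?_⟩
    · simp
    · intro j hj
      have h1 : f (t + 1) ≤ f (j + (t + 1)) := hmono (j + (t + 1)) (by omega) (t + 1) (by omega)
      have h2 := hst (j + (t + 1)) (by omega)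
      show f (j + 1 + (t + 1)) - f (t + 1) = f (j + (t + 1)) - f (t + 1) ∨
        f (j + 1 + (t + 1)) - f (t + 1) = f (j + (t + 1)) - f (t + 1) + 1
      rw [show j + 1 + (t + 1) = j + (t + 1) + 1 from by omega]
      omega
    · intro j h1 h2
      rw [show shiftSeq (t + 1) ψ (j - 1) = ψ (j + t) from by
        simp only [shiftSeq]; congr 1; omega]
      have d1 : L ^ ψ (j + t) ∣ f (j + (t + 1)) := by
        have := hdv (j + (t + 1)) (by omega) (by omega)
        rwa [show j + (t + 1) - 1 = j + t from by omega] at this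
      have d2 : L ^ ψ (j + t) ∣ f (t + 1) := by
        have d3 := hdv (t + 1) (by omega) (by omega)
        rw [Nat.add_sub_cancel] at d3
        exact dvd_trans (pow_dvd_pow L (hdom (j + t) (by omega) (by omega))) d3
      exact Nat.dvd_sub d1 d2
    · intro i j hij hjc hHi hHj
      have hmi : f (t + 1) ≤ f (i + (t + 1)) := hmono (i + (t + 1)) (by omega) (t + 1) (by omega)
      have key : f (i + (t + 1)) < f (j + (t + 1)) :=
        hpm (i + (t + 1)) (j + (t + 1)) (by omega) (by omega) (hv_shift hw hHi) (hv_shift hw hHj)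
      show f (i + (t + 1)) - f (t + 1) < f (j + (t + 1)) - f (t + 1)
      omega
    · show f (c' + (t + 1)) - f (t + 1) = f (t + 1 + c') - f (t + 1)
      rw [show c' + (t + 1) = t + 1 + c' from by omega]
    · have := hmono (t + 1 + c') le_rfl (t + 1) (by omega)
      omega
  · rintro ⟨x₀, y, ⟨f₁, ⟨h10, h1st, h1dv, h1pm⟩, h1c⟩, ⟨g, ⟨hg0, hgst, hgdv, hgpm⟩, hgc⟩, rfl⟩
    have hHt : HvRow ψ (t + 1) := Or.inr (by simpa using hw)
    have hx₀dv : L ^ ψ t ∣ x₀ := by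
      have := h1dv (t + 1) (by omega) le_rfl
      rwa [Nat.add_sub_cancel, h1c] at this
    refine ⟨fun j => if j ≤ t + 1 then f₁ j else x₀ + g (j - (t + 1)), ⟨?_, ?_, ?_, ?_⟩, ?_⟩
    · simp [h10]
    · intro j hj
      by_cases h1 : j + 1 ≤ t + 1
      · simp only [if_pos h1, if_pos (by omega : j ≤ t + 1)]
        exact h1st j (by omega)
      · by_cases h2 : j ≤ t + 1
        · have hj' : j = t + 1 := by omega
          subst hj'
          simp only [if_pos h2, if_neg h1]
          rw [show t + 1 + 1 - (t + 1) = 1 from by omega, h1c]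
          have h3 := hgst 0 (by omega)
          simp only [Nat.zero_add] at h3
          omega
        · simp only [if_neg h2, if_neg h1]
          rw [show j + 1 - (t + 1) = j - (t + 1) + 1 from by omega]
          have h3 := hgst (j - (t + 1)) (by omega)
          omega
    · intro j hj1 hj2
      by_cases h2 : j ≤ t + 1
      · simp only [if_pos h2]
        exact h1dv j hj1 h2
      · simp only [if_neg h2]
        have hd1 : L ^ ψ (j - 1) ∣ x₀ :=
          dvd_trans (pow_dvd_pow L (hdom (j - 1) (by omega) (by omega))) hx₀dv
        have hd2 : L ^ ψ (j - 1) ∣ g (j - (t + 1)) := by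
          have := hgdv (j - (t + 1)) (by omega) (by omega)
          rwa [show shiftSeq (t + 1) ψ (j - (t + 1) - 1) = ψ (j - 1) from by
            simp only [shiftSeq]; congr 1; omega] at this
        exact dvd_add hd1 hd2
    · intro i j hij hjc hHi hHj
      by_cases hj2 : j ≤ t + 1
      · simp only [if_pos (by omega : i ≤ t + 1), if_pos hj2]
        exact h1pm i j hij hj2 hHi hHj
      · have hdj1 : 1 ≤ j - (t + 1) := by omega
        have hHj' : HvRow (shiftSeq (t + 1) ψ) (j - (t + 1)) := by
          apply hv_unshift hdj1
          rwa [show j - (t + 1) + (t + 1) = j from by omega]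
        have hgj : 1 ≤ g (j - (t + 1)) := by
          have := hgpm 0 (j - (t + 1)) (by omega) (by omega) (Or.inl rfl) hHj'
          omega
        simp only [if_neg hj2]
        by_cases hi2 : i ≤ t + 1
        · simp only [if_pos hi2]
          by_cases hi3 : i = t + 1
          · subst hi3
            rw [h1c]
            omega
          · have h5 : f₁ i < f₁ (t + 1) := h1pm i (t + 1) (by omega) le_rfl hHi hHt
            rw [h1c] at h5
            omega
        · simp only [if_neg hi2]
          have hdi1 : 1 ≤ i - (t + 1) := by omega
          have hHi' : HvRow (shiftSeq (t + 1) ψ) (i - (t + 1)) := by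
            apply hv_unshift hdi1
            rwa [show i - (t + 1) + (t + 1) = i from by omega]
          have := hgpm (i - (t + 1)) (j - (t + 1)) (by omega) (by omega) hHi' hHj'
          omega
    · simp only [if_neg (by omega : ¬ t + 1 + c' ≤ t + 1)]
      rw [show t + 1 + c' - (t + 1) = c' from by omega, hgc]

lemma div_add_div_le (a b n : ℕ) : a / n + b / n ≤ (a + b) / n := by
  rcases Nat.eq_zero_or_pos n with rfl | hn
  · simp
  · rw [Nat.le_div_iff_mul_le hn, add_mul]
    exact Nat.add_le_add (Nat.div_mul_le_self a n) (Nat.div_mul_le_self b n)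

lemma pow_add_one_le {L : ℕ} (hL : 1 ≤ L) : ∀ n, 1 ≤ n → L ^ n + 1 ≤ (L + 1) ^ n := by
  intro n hn
  obtain ⟨p, rfl⟩ : ∃ p, n = p + 1 := ⟨n - 1, by omega⟩
  clear hn
  induction p with
  | zero => simp
  | succ q ih =>
    have h1 : (L + 1) ^ (q + 1 + 1) = (L + 1) ^ (q + 1) * (L + 1) := pow_succ _ _
    have h2 : L ^ (q + 1 + 1) = L ^ (q + 1) * L := pow_succ _ _
    have h3 : (L ^ (q + 1) + 1) * (L + 1) ≤ (L + 1) ^ (q + 1) * (L + 1) :=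
      Nat.mul_le_mul ih le_rfl
    have h4 : (L ^ (q + 1) + 1) * (L + 1) = L ^ (q + 1) * L + L ^ (q + 1) + L + 1 := by ring
    omega

lemma sum3 (c : ℕ) : ∀ n, 2 * (∑ r ∈ Finset.Icc 1 n, c / 3 ^ r) + c / 3 ^ n ≤ c := by
  intro n
  induction n with
  | zero => simp
  | succ p ih =>
    rw [Finset.sum_Icc_succ_top (by omega : 1 ≤ p + 1)]
    have h1 : 3 * (c / 3 ^ (p + 1)) ≤ c / 3 ^ p := by
      rw [show c / 3 ^ (p + 1) = c / 3 ^ p / 3 from by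
        rw [Nat.div_div_eq_div_mul, ← pow_succ]]
      have := Nat.div_mul_le_self (c / 3 ^ p) 3
      omega
    omega

lemma sig_le3 {L M : ℕ} (hL : 2 ≤ L) (hM : 3 * (L + 1) ≤ M) (n c : ℕ) :
    ∑ r ∈ Finset.Icc 1 n, (L ^ r + 1) * (c / M ^ r) ≤ ∑ r ∈ Finset.Icc 1 n, c / 3 ^ r := by
  refine Finset.sum_le_sum fun r hr => ?_
  have hr1 : 1 ≤ r := (Finset.mem_Icc.mp hr).1
  have h1 : (3 * (L + 1)) ^ r ≤ M ^ r := Nat.pow_le_pow_left hM r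
  have h2 : c / M ^ r ≤ c / (3 ^ r * (L + 1) ^ r) := by
    rw [← mul_pow]
    exact Nat.div_le_div_left h1 (by positivity)
  have h3 : (L ^ r + 1) * (c / M ^ r) ≤ (L + 1) ^ r * (c / (3 ^ r * (L + 1) ^ r)) :=
    Nat.mul_le_mul (pow_add_one_le (by omega) r hr1) h2
  refine h3.trans ?_
  rw [show c / (3 ^ r * (L + 1) ^ r) = c / 3 ^ r / (L + 1) ^ r from
    (Nat.div_div_eq_div_mul _ _ _).symm, mul_comm]
  exact Nat.div_mul_le_self _ _

lemma sig_mono {L M : ℕ} {ℓ ℓ' : ℕ} (h : ℓ ≤ ℓ') (c : ℕ) : Sig L M ℓ c ≤ Sig L M ℓ' c :=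
  Finset.sum_le_sum_of_subset (Finset.Icc_subset_Icc le_rfl (by omega))

lemma sig_superadd {L M : ℕ} (hM : 1 ≤ M) {ℓ t c' : ℕ} (hℓ : 2 ≤ ℓ)
    (ht : M ^ (ℓ - 1) ≤ t + 1) :
    Sig L M (ℓ - 1) t + L ^ (ℓ - 1) + 1 + Sig L M ℓ c' ≤ Sig L M ℓ (t + 1 + c') := by
  obtain ⟨n, rfl⟩ : ∃ n, ℓ = n + 2 := ⟨ℓ - 2, by omega⟩
  have ht' : M ^ (n + 1) ≤ t + 1 := ht
  have h1 : ∀ a : ℕ, ∑ r ∈ Finset.Icc 1 (n + 1), (L ^ r + 1) * (a / M ^ r)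
      = ∑ r ∈ Finset.Icc 1 n, (L ^ r + 1) * (a / M ^ r) + (L ^ (n + 1) + 1) * (a / M ^ (n + 1)) :=
    fun a => Finset.sum_Icc_succ_top (by omega) _
  show Sig L M (n + 1) t + L ^ (n + 1) + 1 + Sig L M (n + 2) c' ≤ Sig L M (n + 2) (t + 1 + c')
  unfold Sig
  rw [show n + 2 - 1 = n + 1 from rfl, show n + 1 - 1 = n from rfl, h1 c', h1 (t + 1 + c')]
  have hsum : ∑ r ∈ Finset.Icc 1 n, (L ^ r + 1) * (t / M ^ r)
      + ∑ r ∈ Finset.Icc 1 n, (L ^ r + 1) * (c' / M ^ r)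
      ≤ ∑ r ∈ Finset.Icc 1 n, (L ^ r + 1) * ((t + 1 + c') / M ^ r) := by
    rw [← Finset.sum_add_distrib]
    refine Finset.sum_le_sum fun r _ => ?_
    rw [← Nat.mul_add]
    exact Nat.mul_le_mul le_rfl
      (le_trans (div_add_div_le t c' (M ^ r)) (Nat.div_le_div_right (by omega)))
  have htop : (L ^ (n + 1) + 1) * (c' / M ^ (n + 1)) + (L ^ (n + 1) + 1)
      ≤ (L ^ (n + 1) + 1) * ((t + 1 + c') / M ^ (n + 1)) := by
    have h2 : (c' + M ^ (n + 1)) / M ^ (n + 1) = c' / M ^ (n + 1) + 1 :=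
      Nat.add_div_right c' (by positivity)
    have h3 : (c' + M ^ (n + 1)) / M ^ (n + 1) ≤ (t + 1 + c') / M ^ (n + 1) :=
      Nat.div_le_div_right (by omega)
    calc (L ^ (n + 1) + 1) * (c' / M ^ (n + 1)) + (L ^ (n + 1) + 1)
        = (L ^ (n + 1) + 1) * (c' / M ^ (n + 1) + 1) := by ring
      _ ≤ (L ^ (n + 1) + 1) * ((t + 1 + c') / M ^ (n + 1)) := by
          apply Nat.mul_le_mul le_rfl
          omega
  omega

/-- `zetaL` comparison is `L`-adic divisibility. -/
lemma le_zetaL_iff {L : ℕ} (hL : 2 ≤ L) (j w : ℕ) : w ≤ zetaL L j ↔ L ^ w ∣ j + 1 := by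
  have hbdd : BddAbove {k | L ^ k ∣ j + 1} := by
    refine ⟨j + 1, fun k hk => ?_⟩
    have h1 : L ^ k ≤ j + 1 := Nat.le_of_dvd (by omega) hk
    have h2 : k < L ^ k := Nat.lt_pow_self (by omega)
    omega
  have hne : {k | L ^ k ∣ j + 1}.Nonempty := ⟨0, by simp⟩
  constructor
  · intro h
    have hmem : zetaL L j ∈ {k | L ^ k ∣ j + 1} := Nat.sSup_mem hne hbdd
    exact dvd_trans (pow_dvd_pow L h) hmem
  · intro h
    exact le_csSup hbdd h

/-- The core hierarchical lemma, in profile form. -/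
theorem core {L M : ℕ} (hL : 2 ≤ L) (hM : 3 * (L + 1) ≤ M) :
    ∀ n ℓ c (ψ : ℕ → ℕ), ℓ + c ≤ n → 1 ≤ ℓ → Psi ψ → CondA M ψ →
    (∀ j i, 1 ≤ j → j < ℓ → j ≤ ψ i → M ^ j ≤ i + 1) →
    (∀ i, i < c → ψ i < ℓ) → (c = 0 ∨ ψ (c - 1) = 0) →
    (∀ i, i < c → 1 ≤ ψ i → M ^ ψ i ≤ c - i) →
    ∃ A B, A ≤ Sig L M ℓ c ∧ c + 1 ≤ B + max (Sig L M ℓ c) 1 ∧ B ≤ c ∧ A ≤ B ∧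
      ∀ x, Prof L ψ c x ↔ (A ≤ x ∧ x ≤ B) := by
  intro n
  induction n with
  | zero => intro ℓ c ψ h h1; omega
  | succ n ih =>
    intro ℓ c ψ hn hℓ hPsi hCA hBc hltc hlight hHc
    by_cases hℓ1 : ℓ = 1
    · subst hℓ1
      refine ⟨0, c, Nat.zero_le _, by omega, le_rfl, Nat.zero_le _, fun x => ?_⟩
      rw [prof_all_light (fun i hi => by have := hltc i hi; omega) x]
      omega
    by_cases hex : ∃ i, i < c ∧ ℓ - 1 ≤ ψ i
    · -- main inductive step
      have hℓ2 : 2 ≤ ℓ := by omega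
      classical
      obtain ⟨t, htc, htw, htmin⟩ :
          ∃ t, t < c ∧ ℓ - 1 ≤ ψ t ∧ ∀ i, i < t → ψ i < ℓ - 1 := by
        refine ⟨Nat.find hex, (Nat.find_spec hex).1, (Nat.find_spec hex).2, fun i hi => ?_⟩
        have h := Nat.find_min hex hi
        have h2 : i < c := lt_trans hi (Nat.find_spec hex).1
        omega
      have hψt : ψ t = ℓ - 1 := by have := hltc t htc; omega
      have hMt : M ^ (ℓ - 1) ≤ t + 1 := hBc (ℓ - 1) t (by omega) (by omega) htw
      have hM9 : 9 ≤ M := by omega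
      have hMM : M ≤ M ^ (ℓ - 1) := Nat.le_self_pow (by omega) M
      have ht1 : 1 ≤ t := by omega
      have hψt1 : ψ (t - 1) = 0 := by
        by_contra hcon
        have := hPsi (t - 1) (by omega)
        rw [show t - 1 + 1 = t from by omega] at this
        omega
      have hct : M ^ (ℓ - 1) ≤ c - t := by
        have := hHc t htc (by omega)
        rwa [hψt] at this
      obtain ⟨c', rfl⟩ : ∃ c', c = t + 1 + c' := ⟨c - t - 1, by omega⟩
      have hc'1 : 1 ≤ c' := by omega
      have hc'M : M ^ (ℓ - 1) ≤ c' + 1 := by omega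
      -- IH for the lower part
      obtain ⟨A₁, B₁, h1A, h1B, h1Bc, h1AB, h1P⟩ := ih (ℓ - 1) t ψ (by omega) (by omega)
        hPsi hCA (fun j i hj1 hj2 h => hBc j i hj1 (by omega) h) htmin (Or.inr hψt1)
        (fun i hi h1 => by
          have h2 := hCA i t hi
          rwa [min_eq_left (by have := htmin i hi; omega)] at h2)
      -- IH for the upper part
      obtain ⟨A₂, B₂, h2A, h2B, h2Bc, h2AB, h2P⟩ := ih ℓ c' (shiftSeq (t + 1) ψ)
        (by omega) hℓ
        (fun i hi => by
          have h3 := hPsi (i + (t + 1)) (by simpa [shiftSeq] using hi)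
          simp only [shiftSeq]
          rw [show i + 1 + (t + 1) = i + (t + 1) + 1 from by omega]
          exact h3)
        (fun i j hij => by
          have h3 := hCA (i + (t + 1)) (j + (t + 1)) (by omega)
          simp only [shiftSeq]
          rwa [show j + (t + 1) - (i + (t + 1)) = j - i from by omega] at h3)
        (fun j i hj1 hj2 h => by
          have h2 := hCA t (i + (t + 1)) (by omega)
          have h3 : j ≤ min (ψ t) (ψ (i + (t + 1))) := by
            simp only [le_min_iff]
            exact ⟨by omega, by simpa [shiftSeq] using h⟩
          have h4 : M ^ j ≤ M ^ min (ψ t) (ψ (i + (t + 1))) :=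
            Nat.pow_le_pow_right (by omega) h3
          have h5 : i + (t + 1) - t = i + 1 := by omega
          omega)
        (fun i hi => by
          have := hltc (i + (t + 1)) (by omega)
          simpa [shiftSeq] using this)
        (Or.inr (by
          rcases hlight with h | h
          · omega
          · simp only [shiftSeq]
            rwa [show c' - 1 + (t + 1) = t + 1 + c' - 1 from by omega]))
        (fun i hi h1 => by
          have h2 := hHc (i + (t + 1)) (by omega) (by simpa [shiftSeq] using h1)
          simp only [shiftSeq]
          rwa [show t + 1 + c' - (i + (t + 1)) = c' - i from by omega] at h2)
      have hPpos : 0 < L ^ (ℓ - 1) := by positivity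
      -- width of the level-(ℓ-1) interval
      have hwidth : A₁ + L ^ (ℓ - 1) + 1 ≤ B₁ := by
        have s1 : Sig L M (ℓ - 1) t ≤ ∑ r ∈ Finset.Icc 1 (ℓ - 2), t / 3 ^ r := by
          unfold Sig
          rw [show ℓ - 1 - 1 = ℓ - 2 from by omega]
          exact sig_le3 hL hM _ _
        have s2 := sum3 t (ℓ - 2)
        have s3 : L ^ (ℓ - 1) + 1 ≤ t / 3 ^ (ℓ - 2) := by
          rw [Nat.le_div_iff_mul_le (by positivity)]
          have e1 : 3 ^ (ℓ - 1) * (L + 1) ^ (ℓ - 1) ≤ t + 1 := by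
            calc 3 ^ (ℓ - 1) * (L + 1) ^ (ℓ - 1) = (3 * (L + 1)) ^ (ℓ - 1) := (mul_pow _ _ _).symm
              _ ≤ M ^ (ℓ - 1) := Nat.pow_le_pow_left hM _
              _ ≤ t + 1 := hMt
          have e3 : L ^ (ℓ - 1) + 1 ≤ (L + 1) ^ (ℓ - 1) := pow_add_one_le (by omega) _ (by omega)
          have e4 : 3 ^ (ℓ - 1) = 3 * 3 ^ (ℓ - 2) := by
            rw [← pow_succ']
            congr 1
            omega
          have e5 : 3 * (3 ^ (ℓ - 2) * (L + 1) ^ (ℓ - 1)) ≤ t + 1 := by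
            rw [← mul_assoc, ← e4]
            exact e1
          have e6 : (L ^ (ℓ - 1) + 1) * 3 ^ (ℓ - 2) ≤ 3 ^ (ℓ - 2) * (L + 1) ^ (ℓ - 1) := by
            rw [mul_comm]
            exact Nat.mul_le_mul le_rfl e3
          have e7 : 0 < 3 ^ (ℓ - 2) * (L + 1) ^ (ℓ - 1) := by positivity
          omega
        omega
      -- merging estimate for the upper interval
      have hmerge : L ^ (ℓ - 1) + A₂ ≤ B₂ := by
        have s1 : Sig L M ℓ c' ≤ ∑ r ∈ Finset.Icc 1 (ℓ - 1), c' / 3 ^ r := sig_le3 hL hM _ _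
        have s2 := sum3 c' (ℓ - 1)
        have s3 : L ^ (ℓ - 1) ≤ c' / 3 ^ (ℓ - 1) := by
          rw [Nat.le_div_iff_mul_le (by positivity)]
          have e1 : 3 ^ (ℓ - 1) * (L + 1) ^ (ℓ - 1) ≤ c' + 1 := by
            calc 3 ^ (ℓ - 1) * (L + 1) ^ (ℓ - 1) = (3 * (L + 1)) ^ (ℓ - 1) := (mul_pow _ _ _).symm
              _ ≤ M ^ (ℓ - 1) := Nat.pow_le_pow_left hM _
              _ ≤ c' + 1 := hc'M
          have e3 : L ^ (ℓ - 1) + 1 ≤ (L + 1) ^ (ℓ - 1) := pow_add_one_le (by omega) _ (by omega)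
          have e6 : (L ^ (ℓ - 1) + 1) * 3 ^ (ℓ - 1) ≤ 3 ^ (ℓ - 1) * (L + 1) ^ (ℓ - 1) := by
            rw [mul_comm]
            exact Nat.mul_le_mul le_rfl e3
          have e7 : L ^ (ℓ - 1) * 3 ^ (ℓ - 1) + 3 ^ (ℓ - 1) = (L ^ (ℓ - 1) + 1) * 3 ^ (ℓ - 1) := by
            ring
          have e8 : 0 < 3 ^ (ℓ - 1) := by positivity
          omega
        omega
      have hsup : Sig L M (ℓ - 1) t + L ^ (ℓ - 1) + 1 + Sig L M ℓ c' ≤ Sig L M ℓ (t + 1 + c') :=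
        sig_superadd (by omega) hℓ2 hMt
      -- The set of reachable columns at the heavy row `t+1`
      have hGsub : ∀ x₀, Prof L ψ (t + 1) x₀ → L ^ (ℓ - 1) ∣ x₀ ∧ A₁ ≤ x₀ ∧ x₀ ≤ B₁ + 1 := by
        intro x₀ hx₀
        obtain ⟨hdvd, a, hpa, hor⟩ := prof_step_down hx₀
        rw [hψt] at hdvd
        have := (h1P a).mp hpa
        exact ⟨hdvd, by omega, by omega⟩
      have hGup : ∀ z, L ^ (ℓ - 1) ∣ z → A₁ + 1 ≤ z → z ≤ B₁ + 1 → Prof L ψ (t + 1) z := by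
        intro z h1 h2 h3
        have hz : z - 1 + 1 = z := by omega
        have h4 : Prof L ψ t (z - 1) := (h1P (z - 1)).mpr ⟨by omega, by omega⟩
        have h5 := prof_step_up h4 (by rw [hψt, hz]; exact h1)
        rwa [hz] at h5
      set G : Set ℕ := {x₀ | Prof L ψ (t + 1) x₀} with hGdef
      have hGmem : ∀ x₀, x₀ ∈ G ↔ Prof L ψ (t + 1) x₀ := fun _ => Iff.rfl
      obtain ⟨x₀m, hx₀mG, hx₀m⟩ : ∃ z ∈ G, z ≤ A₁ + L ^ (ℓ - 1) := by
        refine ⟨L ^ (ℓ - 1) * (A₁ / L ^ (ℓ - 1)) + L ^ (ℓ - 1),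
          hGup _ ((dvd_mul_right _ _).add dvd_rfl) ?_ ?_, ?_⟩
        · have h5 := Nat.div_add_mod A₁ (L ^ (ℓ - 1))
          have h6 := Nat.mod_lt A₁ hPpos
          omega
        · have h5 : L ^ (ℓ - 1) * (A₁ / L ^ (ℓ - 1)) ≤ A₁ := by
            rw [mul_comm]
            exact Nat.div_mul_le_self _ _
          omega
        · have h5 : L ^ (ℓ - 1) * (A₁ / L ^ (ℓ - 1)) ≤ A₁ := by
            rw [mul_comm]
            exact Nat.div_mul_le_self _ _
          omega
      obtain ⟨x₀M, hx₀MG, hx₀M⟩ : ∃ z ∈ G, B₁ + 2 ≤ z + L ^ (ℓ - 1) := by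
        have h5 := Nat.div_add_mod (B₁ + 1) (L ^ (ℓ - 1))
        have h6 := Nat.mod_lt (B₁ + 1) hPpos
        have h7 : L ^ (ℓ - 1) * ((B₁ + 1) / L ^ (ℓ - 1)) ≤ B₁ + 1 := by
          rw [mul_comm]
          exact Nat.div_mul_le_self _ _
        exact ⟨L ^ (ℓ - 1) * ((B₁ + 1) / L ^ (ℓ - 1)),
          hGup _ (dvd_mul_right _ _) (by omega) (by omega), by omega⟩
      have hGbdd : BddAbove G := ⟨B₁ + 1, fun x hx => (hGsub x hx).2.2⟩
      have hGne : G.Nonempty := ⟨x₀m, hx₀mG⟩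
      have hg₀G : sInf G ∈ G := Nat.sInf_mem hGne
      have hg₁G : sSup G ∈ G := Nat.sSup_mem hGne hGbdd
      have hg₀le : sInf G ≤ A₁ + L ^ (ℓ - 1) := le_trans (Nat.sInf_le hx₀mG) hx₀m
      have hg₁ge : B₁ + 2 ≤ sSup G + L ^ (ℓ - 1) := by
        have := le_csSup hGbdd hx₀MG
        omega
      have hg₁le : sSup G ≤ B₁ + 1 := (hGsub _ hg₁G).2.2
      have hg₀g₁ : sInf G ≤ sSup G := Nat.sInf_le hg₁G
      have hgap : ∀ z, z ∈ G → z < sSup G → z + L ^ (ℓ - 1) ∈ G := by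
        intro z hz hzlt
        obtain ⟨hzd, hzA, hzB⟩ := hGsub z hz
        obtain ⟨hgd, -, hgB⟩ := hGsub _ hg₁G
        have hd : L ^ (ℓ - 1) ∣ sSup G - z := Nat.dvd_sub hgd hzd
        have hd2 : L ^ (ℓ - 1) ≤ sSup G - z := Nat.le_of_dvd (by omega) hd
        exact hGup _ (Nat.dvd_add hzd dvd_rfl) (by omega) (by omega)
      have hsplit : ∀ x, Prof L ψ (t + 1 + c') x ↔
          ∃ x₀ y, x₀ ∈ G ∧ Prof L (shiftSeq (t + 1) ψ) c' y ∧ x = x₀ + y :=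
        fun x => prof_split hc'1 (by omega)
          (fun i h1 h2 => by have := hltc i h2; omega) x
      refine ⟨sInf G + A₂, sSup G + B₂, by omega, by omega, by omega, by omega, fun x => ?_⟩
      rw [hsplit x]
      constructor
      · rintro ⟨x₀, y, hx₀, hy, rfl⟩
        have h6 := (h2P y).mp hy
        have h7 := Nat.sInf_le hx₀
        have h8 := le_csSup hGbdd hx₀
        omega
      · rintro ⟨hx1, hx2⟩
        set S : Set ℕ := {z | z ∈ G ∧ z + A₂ ≤ x} with hSdef
        have hSne : S.Nonempty := ⟨sInf G, hg₀G, by omega⟩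
        have hSbdd : BddAbove S := ⟨B₁ + 1, fun z hz => (hGsub z hz.1).2.2⟩
        obtain ⟨hzG, hzle⟩ : sSup S ∈ G ∧ sSup S + A₂ ≤ x := Nat.sSup_mem hSne hSbdd
        by_cases hxz : x ≤ sSup S + B₂
        · exact ⟨sSup S, x - sSup S, hzG,
            (h2P (x - sSup S)).mpr ⟨by omega, by omega⟩, by omega⟩
        · exfalso
          have h9 : sSup S ≤ sSup G := le_csSup hGbdd hzG
          have hzg : sSup S < sSup G := by omega
          have hzP : sSup S + L ^ (ℓ - 1) ∈ G := hgap _ hzG hzg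
          have h10 : sSup S + L ^ (ℓ - 1) ∈ S := ⟨hzP, by omega⟩
          have := le_csSup hSbdd h10
          omega
    · -- no letter of weight ℓ-1 below c : use the induction hypothesis at level ℓ-1
      push_neg at hex
      obtain ⟨A, B, h1, h2, h3, h4, h5⟩ := ih (ℓ - 1) c ψ (by omega) (by omega) hPsi hCA
        (fun j i hj1 hj2 => hBc j i hj1 (by omega))
        (fun i hi => by have := hex i hi; omega)
        hlight hHc
      have h6 := sig_mono (show ℓ - 1 ≤ ℓ from by omega) (L := L) (M := M) c
      exact ⟨A, B, h1.trans h6, by omega, h3, h4, h5⟩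

/-- Bridge between `Vset` membership and profiles. -/
lemma vset_mem_iff {L : ℕ} (hL : 2 ≤ L) {k s : ℕ} {ψ : ℕ → ℕ} {c : ℕ} (hc : 1 ≤ c)
    (hψk : ∀ j, j < c → ψ j ≤ k) (hs : L ^ k ∣ s) (v : ℕ × ℕ) :
    v ∈ Vset (shiftSeq s (zetaL L)) ψ c ↔ (v.2 = c ∧ Prof L ψ c v.1 ∧ 1 ≤ v.1) := by
  simp only [Vset, Set.mem_setOf_eq]
  constructor
  · rintro ⟨hv2, π, n, hπ0, hπn, ⟨hsteps, hopen⟩, hperm⟩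
    have hrow : ∀ i, i ≤ n → (π i).2 = i := by
      intro i
      induction i with
      | zero => intro _; rw [hπ0]
      | succ p ihp =>
        intro hp
        rcases hsteps p (by omega) with ⟨h1, h2⟩ | ⟨h1, h2⟩ <;>
          rw [h2, ihp (by omega)]
    have hnc : c = n := by
      have := hrow n le_rfl
      rw [hπn] at this
      omega
    subst hnc
    have hstf : ∀ j, j < c → (π (j + 1)).1 = (π j).1 ∨ (π (j + 1)).1 = (π j).1 + 1 := by
      intro j hj
      rcases hsteps j hj with ⟨h1, _⟩ | ⟨h1, _⟩
      · exact Or.inl h1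
      · exact Or.inr h1
    have hmono := steps_mono (f := fun j => (π j).1) hstf
    refine ⟨hv2, ⟨fun j => (π j).1,
      ⟨by show (π 0).1 = 0; rw [hπ0], hstf, ?_, ?_⟩,
      by show (π c).1 = v.1; rw [hπn]⟩, ?_⟩
    · intro j h1 h2
      rcases hopen j h2 with h | ⟨h3, h4, h5⟩
      · exfalso
        have h6 := hrow j h2
        rw [h] at h6
        simp at h6
        omega
      · rw [hrow j h2] at h5
        simp only [shiftSeq] at h5
        have h6 := (le_zetaL_iff hL _ _).mp h5
        rw [show (π j).1 - 1 + s + 1 = (π j).1 + s from by omega] at h6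
        have h8 : L ^ ψ (j - 1) ∣ s :=
          dvd_trans (pow_dvd_pow L (hψk (j - 1) (by omega))) hs
        have h9 := Nat.dvd_sub h6 h8
        simpa using h9
    · intro i j hij hjc hHi hHj
      have hne : π i ≠ π j := by
        intro he
        have h1 := hrow i (by omega)
        have h2 := hrow j (by omega)
        rw [he] at h1
        omega
      have hHi' : Heavy ψ (π i) := by
        rcases hHi with h | h
        · left; rw [hrow i (by omega)]; exact h
        · right; rwa [hrow i (by omega)]
      have hHj' : Heavy ψ (π j) := by
        rcases hHj with h | h
        · left; rw [hrow j (by omega)]; exact h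
        · right; rwa [hrow j (by omega)]
      have hne1 := hperm i (by omega) j hjc hne hHi' hHj'
      have hle : (π i).1 ≤ (π j).1 := hmono j hjc i (le_of_lt hij)
      show (π i).1 < (π j).1
      omega
    · rcases hopen c le_rfl with h | ⟨h3, _, _⟩
      · exfalso
        have h6 := hrow c le_rfl
        rw [h] at h6
        simp at h6
        omega
      · rwa [hπn] at h3
  · rintro ⟨hv2, ⟨f, ⟨hf0, hfst, hfdv, hfpm⟩, hfc⟩, hv1⟩
    have hfj1 : ∀ j, 1 ≤ j → j ≤ c → HvRow ψ j → 1 ≤ f j := by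
      intro j h1 h2 h3
      have := hfpm 0 j (by omega) h2 (Or.inl rfl) h3
      omega
    have hlightz : ∀ j, 1 ≤ j → j ≤ c → f j = 0 → ψ (j - 1) = 0 := by
      intro j h1 h2 h3
      by_contra h4
      have := hfj1 j h1 h2 (Or.inr (by omega))
      omega
    set g : ℕ → ℕ := fun j => if j = 0 then 0 else max (f j) 1 with hgdef
    have hg0 : g 0 = 0 := by simp [hgdef]
    have hgpos : ∀ j, j ≠ 0 → g j = max (f j) 1 := by
      intro j hj
      simp [hgdef, hj]
    refine ⟨hv2, fun j => (g j, j), c, ?_, ?_, ⟨?_, ?_⟩, ?_⟩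
    · show ((g 0 : ℕ), (0 : ℕ)) = ((0 : ℕ), (0 : ℕ))
      rw [hg0]
    · show ((g c : ℕ), c) = v
      have h1 : g c = v.1 := by
        rw [hgpos c (by omega), hfc]
        omega
      rw [h1, show c = v.2 from hv2.symm]
    · intro i hi
      show (g (i + 1) = g i ∧ i + 1 = i + 1) ∨ (g (i + 1) = g i + 1 ∧ i + 1 = i + 1)
      have hs1 := hfst i hi
      have e2 : g (i + 1) = max (f (i + 1)) 1 := hgpos _ (by omega)
      by_cases h0 : i = 0
      · subst h0
        omega
      · have e1 : g i = max (f i) 1 := hgpos _ h0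
        omega
    · intro i hi
      show ((g i : ℕ), i) = ((0 : ℕ), (0 : ℕ)) ∨
        (1 ≤ g i ∧ 1 ≤ i ∧ ψ (i - 1) ≤ shiftSeq s (zetaL L) (g i - 1))
      by_cases h0 : i = 0
      · subst h0
        left
        rw [hg0]
      · right
        have e1 : g i = max (f i) 1 := hgpos _ h0
        refine ⟨by omega, by omega, ?_⟩
        by_cases hz : f i = 0
        · rw [hlightz i (by omega) hi hz]
          exact Nat.zero_le _
        · rw [show g i = f i from by omega]
          simp only [shiftSeq]
          rw [le_zetaL_iff hL]
          rw [show f i - 1 + s + 1 = f i + s from by omega]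
          exact Nat.dvd_add (hfdv i (by omega) hi)
            (dvd_trans (pow_dvd_pow L (hψk (i - 1) (by omega))) hs)
    · intro i hic j hjc hne hHi hHj
      have hHvi : HvRow ψ i := by
        rcases hHi with h | h
        · left; exact h
        · right; exact h
      have hHvj : HvRow ψ j := by
        rcases hHj with h | h
        · left; exact h
        · right; exact h
      have key : ∀ a b, a < b → b ≤ c → HvRow ψ a → HvRow ψ b → g a < g b := by
        intro a b hab hbc ha hb
        have h1 := hfpm a b hab hbc ha hb
        have h2 : 1 ≤ f b := hfj1 b (by omega) hbc hb
        have e2 : g b = max (f b) 1 := hgpos _ (by omega)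
        by_cases h0 : a = 0
        · subst h0
          rw [hg0]
          omega
        · have h3 : 1 ≤ f a := hfj1 a (by omega) (by omega) ha
          have e1 : g a = max (f a) 1 := hgpos _ h0
          omega
      show g i ≠ g j
      rcases Nat.lt_or_ge i j with h | h
      · exact Nat.ne_of_lt (key i j h hjc hHvi hHvj)
      · have h2 : j < i := by
          rcases Nat.eq_or_lt_of_le h with h3 | h3
          · exact absurd (by rw [h3]) hne
          · exact h3
        exact (Nat.ne_of_lt (key j i h2 hic hHvj hHvi)).symm

end Statement8Aux


theorem statement_8 (L M : ℕ) (hL : 2 ≤ L) (hM : 3 * (L + 1) ≤ M) (k : ℕ) (hk : 1 ≤ k)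
    (ψ : ℕ → ℕ) (hψ : SpacedUpTo M k ψ) (hne : (idxSet ψ k).Nonempty) (m : ℕ) :
    ∃ a b : ℕ, a ≤ b ∧
      Vset (shiftSeq (m * L ^ k) (zetaL L)) ψ (idx ψ k - 1) = HSeg (idx ψ k - 1) a b ∧
      (a : ℤ) ≤ max (∑ r ∈ Finset.Icc 1 (k - 1),
          ((L : ℤ) ^ r + 1) * (((idx ψ k - 1) / M ^ r : ℕ) : ℤ)) 1 ∧
      (idx ψ k : ℤ) - max (∑ r ∈ Finset.Icc 1 (k - 1),
          ((L : ℤ) ^ r + 1) * (((idx ψ k - 1) / M ^ r : ℕ) : ℤ)) 1 ≤ (b : ℤ) := by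
  obtain ⟨hPsi, hCondA, hB⟩ := hψ
  have hM9 : 9 ≤ M := by omega
  obtain ⟨c, hcdef⟩ : ∃ c, sInf (idxSet ψ k) = c := ⟨_, rfl⟩
  have hidx : idx ψ k = c + 1 := by unfold idx; rw [hcdef]
  have hck : k ≤ ψ c := by
    have h := Nat.sInf_mem hne
    rw [hcdef] at h
    exact h
  have hlt : ∀ i, i < c → ψ i < k := by
    intro i hi
    by_contra h
    have h2 : i ∈ idxSet ψ k := by
      simp only [idxSet, Set.mem_setOf_eq]
      omega
    have h3 := Nat.sInf_le h2
    rw [hcdef] at h3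
    omega
  have hBc : ∀ j i, 1 ≤ j → j < k → j ≤ ψ i → M ^ j ≤ i + 1 := by
    intro j i h1 h2 h3
    have h4 : i ∈ idxSet ψ j := h3
    have h5 := hB j h1 (by omega) ⟨i, h4⟩
    have h6 := Nat.sInf_le h4
    have h7 : idx ψ j = sInf (idxSet ψ j) + 1 := rfl
    omega
  have hMk : M ^ k ≤ c + 1 := by
    have h5 := hB k hk le_rfl hne
    omega
  have hMle : M ≤ M ^ k := Nat.le_self_pow (by omega) M
  have hc8 : 8 ≤ c := by omega
  have hlight : ψ (c - 1) = 0 := by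
    by_contra h
    have h2 := hPsi (c - 1) (by omega)
    rw [show c - 1 + 1 = c from by omega] at h2
    omega
  have hHc : ∀ i, i < c → 1 ≤ ψ i → M ^ ψ i ≤ c - i := by
    intro i hi h1
    have h2 := hCondA i c hi
    rwa [min_eq_left (by have := hlt i hi; omega)] at h2
  obtain ⟨A, B, hA, hBB, hBle, hAB, hP⟩ :=
    core hL hM (k + c) k c ψ le_rfl hk hPsi hCondA hBc hlt (Or.inr hlight) hHc
  have hsig2 : 2 * Sig L M k c ≤ c := by
    have s1 : Sig L M k c ≤ ∑ r ∈ Finset.Icc 1 (k - 1), c / 3 ^ r := sig_le3 hL hM _ _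
    have s2 : 2 * (∑ r ∈ Finset.Icc 1 (k - 1), c / 3 ^ r) ≤ c :=
      le_trans (Nat.le_add_right _ _) (sum3 c (k - 1))
    omega
  have hB1 : 1 ≤ B := by
    rcases Nat.le_total (Sig L M k c) 1 with hcase | hcase
    · have hBB2 := hBB
      rw [max_eq_right hcase] at hBB2
      omega
    · have hBB2 := hBB
      rw [max_eq_left hcase] at hBB2
      omega
  have hidx1 : idx ψ k - 1 = c := by omega
  have hcast : ∑ r ∈ Finset.Icc 1 (k - 1), ((L : ℤ) ^ r + 1) * (((idx ψ k - 1) / M ^ r : ℕ) : ℤ)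
      = ((Sig L M k c : ℕ) : ℤ) := by
    rw [hidx1]
    unfold Sig
    rw [Nat.cast_sum]
    refine Finset.sum_congr rfl fun r _ => ?_
    push_cast
    ring
  refine ⟨max A 1, B, by omega, ?_, ?_, ?_⟩
  · rw [hidx1]
    ext v
    rw [vset_mem_iff hL (by omega) (fun j hj => by have := hlt j hj; omega)
      (dvd_mul_left (L ^ k) m) v]
    simp only [HSeg, Set.mem_setOf_eq]
    constructor
    · rintro ⟨h1, h2, h3⟩
      have := (hP v.1).mp h2
      exact ⟨h1, by omega, by omega⟩
    · rintro ⟨h1, h2, h3⟩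
      exact ⟨h1, (hP v.1).mpr ⟨by omega, by omega⟩, by omega⟩
  · have h1 : max A 1 ≤ max (Sig L M k c) 1 := by omega
    rw [hcast]
    exact_mod_cast h1
  · have h1 : idx ψ k ≤ B + max (Sig L M k c) 1 := by omega
    have h2 : ((idx ψ k : ℕ) : ℤ) ≤ (B : ℤ) + ((max (Sig L M k c) 1 : ℕ) : ℤ) := by
      exact_mod_cast h1
    rw [Nat.cast_max] at h2
    rw [hcast]
    have h3 : ((1 : ℕ) : ℤ) = 1 := Nat.cast_one
    rw [h3] at h2
    linarith


end Paper
end
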